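/- arXiv:1905.04922 — 9 statements merged into one kernel-verified Lean document; each statement's English description precedes it below -/
import Mathlib

section
/- Let J, h be real numbers with J > 0 and 0 < h < 4J, set z_F = (1/2)·arcosh(4J/h) and λ_F^± = iπ/4 ± z_F. Then both λ_F^+ and λ_F^− lie in the fundamental strip S = {λ ∈ ℂ : −π/4 ≤ Im λ < 3π/4}, and for every λ ∈ S with sinh(2λ) ≠ 0 one has ε(λ) = 0 (equivalently h·sinh(2λ) = 4iJ) if and only if λ = λ_F^+ or λ = λ_F^−. That is, the one-particle energy has precisely the two roots λ_F^± in the fundamental strip. -/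
open Real

/-- Inverse hyperbolic cosine (for `x ≥ 1`). -/
noncomputable def arcosh (x : ℝ) : ℝ := Real.log (x + Real.sqrt (x ^ 2 - 1))

/-
Writing `2λ = u + iv`, the energy vanishes iff `sinh u cos v = 0` and `cosh u sin v = c`, where
`c = 4J/h ≥ 1`. Either `u = 0`, forcing `sin v = c ≥ 1`, or `cos v = 0` with `sin v > 0`; in both
cases `sin v = 1`, which in the strip `v ∈ [-π/2, 3π/2)` pins `v = π/2`, and then `cosh u = c`
gives `u = ±arcosh c = ±2 z_F`.
-/

namespace Complex

theorem sinh_re (z : ℂ) : (sinh z).re = Real.sinh z.re * Real.cos z.im := by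
  conv_lhs => rw [← re_add_im z, sinh_add, sinh_mul_I, cosh_mul_I]
  rw [← ofReal_sinh, ← ofReal_cosh, ← ofReal_sin, ← ofReal_cos]
  simp only [add_re, mul_re, ofReal_re, ofReal_im, I_re, I_im]
  ring

theorem sinh_im (z : ℂ) : (sinh z).im = Real.cosh z.re * Real.sin z.im := by
  conv_lhs => rw [← re_add_im z, sinh_add, sinh_mul_I, cosh_mul_I]
  rw [← ofReal_sinh, ← ofReal_cosh, ← ofReal_sin, ← ofReal_cos]
  simp only [add_im, mul_im, ofReal_re, ofReal_im, I_re, I_im]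
  ring

theorem sinh_eq_ofReal_mul_I_iff {c : ℝ} (hc : 1 ≤ c) {w : ℂ} (hlo : -(π / 2) ≤ w.im)
    (hhi : w.im < 3 * π / 2) : sinh w = c * I ↔ w.im = π / 2 ∧ Real.cosh w.re = c := by
  simp only [Complex.ext_iff, sinh_re, sinh_im, mul_re, mul_im, ofReal_re, ofReal_im, I_re,
    I_im, mul_zero, mul_one, sub_zero, add_zero]
  constructor
  · rintro ⟨hre, him⟩
    have hsin : Real.sin w.im = 1 := by
      rcases mul_eq_zero.mp hre with hsinh | hcos
      · rw [Real.sinh_eq_zero.mp hsinh, Real.cosh_zero, one_mul] at him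
        linarith [Real.sin_le_one w.im]
      · have hpos : 0 < Real.sin w.im :=
          pos_of_mul_pos_right (by linarith) (Real.cosh_pos _).le
        nlinarith [Real.sin_sq_add_cos_sq w.im]
    refine ⟨?_, by rwa [hsin, mul_one] at him⟩
    have := (Real.cos_eq_one_iff_of_lt_of_lt (x := w.im - π / 2) (by linarith [pi_pos])
      (by linarith)).mp (by rw [Real.cos_sub_pi_div_two, hsin])
    linarith
  · rintro ⟨hv, hu⟩
    simp [hv, hu]

end Complex

theorem Real.cosh_eq_iff {c u : ℝ} (hc : 1 ≤ c) :
    cosh u = c ↔ u = Real.arcosh c ∨ u = -Real.arcosh c := by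
  rw [← abs_eq (arcosh_nonneg hc)]
  constructor
  · rintro rfl
    rw [← cosh_abs, arcosh_cosh (abs_nonneg u)]
  · intro hu
    rw [← cosh_abs, hu, cosh_arcosh hc]

theorem energy_roots_in_strip_general (J h : ℝ) (hh0 : 0 < h) (hh4 : h < 4 * J)
    (zF : ℝ) (hzF : zF = (1 / 2) * _root_.arcosh (4 * J / h))
    (lamP lamM : ℂ)
    (hlamP : lamP = Complex.I * (π : ℝ) / 4 + (zF : ℂ))
    (hlamM : lamM = Complex.I * (π : ℝ) / 4 - (zF : ℂ)) :
    (-(π / 4) ≤ lamP.im ∧ lamP.im < 3 * π / 4) ∧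
    (-(π / 4) ≤ lamM.im ∧ lamM.im < 3 * π / 4) ∧
    (∀ lam : ℂ, -(π / 4) ≤ lam.im → lam.im < 3 * π / 4 → Complex.sinh (2 * lam) ≠ 0 →
      ((h : ℂ) * Complex.sinh (2 * lam) = 4 * Complex.I * (J : ℂ) ↔
        lam = lamP ∨ lam = lamM)) := by
  have hc : 1 ≤ 4 * J / h := by rw [le_div_iff₀ hh0]; linarith
  have harcosh : _root_.arcosh (4 * J / h) = Real.arcosh (4 * J / h) := rfl
  have h2zF : 2 * zF = Real.arcosh (4 * J / h) := by rw [hzF, harcosh]; ring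
  have hP : lamP.re = zF ∧ lamP.im = π / 4 := by simp [hlamP]
  have hM : lamM.re = -zF ∧ lamM.im = π / 4 := by simp [hlamM]
  have hpi := pi_pos
  refine ⟨⟨by linarith [hP.2], by linarith [hP.2]⟩, ⟨by linarith [hM.2], by linarith [hM.2]⟩, ?_⟩
  intro lam hlo hhi _
  calc (h : ℂ) * Complex.sinh (2 * lam) = 4 * Complex.I * J
        ↔ Complex.sinh (2 * lam) = ((4 * J / h : ℝ) : ℂ) * Complex.I := by
          rw [mul_comm, ← eq_div_iff (by exact_mod_cast hh0.ne')]
          push_cast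
          ring_nf
    _ ↔ (2 * lam).im = π / 2 ∧ cosh (2 * lam).re = 4 * J / h :=
          Complex.sinh_eq_ofReal_mul_I_iff hc (by simp; linarith) (by simp; linarith)
    _ ↔ lam = lamP ∨ lam = lamM := by
          rw [Real.cosh_eq_iff hc, ← h2zF]
          simp [Complex.ext_iff, hP, hM]
          grind

/-- The one-particle energy `ε(λ) = h − 4iJ/sinh(2λ)` of the XX chain has precisely the
two roots `λ_F^± = iπ/4 ± z_F` in the fundamental strip `−π/4 ≤ Im λ < 3π/4`. -/
theorem energy_roots_in_strip (J h : ℝ) (hJ : 0 < J) (hh0 : 0 < h) (hh4 : h < 4 * J)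
    (zF : ℝ) (hzF : zF = (1 / 2) * _root_.arcosh (4 * J / h))
    (lamP lamM : ℂ)
    (hlamP : lamP = Complex.I * (π : ℝ) / 4 + (zF : ℂ))
    (hlamM : lamM = Complex.I * (π : ℝ) / 4 - (zF : ℂ)) :
    (-(π / 4) ≤ lamP.im ∧ lamP.im < 3 * π / 4) ∧
    (-(π / 4) ≤ lamM.im ∧ lamM.im < 3 * π / 4) ∧
    (∀ lam : ℂ, -(π / 4) ≤ lam.im → lam.im < 3 * π / 4 → Complex.sinh (2 * lam) ≠ 0 →
      ((h : ℂ) * Complex.sinh (2 * lam) = 4 * Complex.I * (J : ℂ) ↔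
        lam = lamP ∨ lam = lamM)) :=
  energy_roots_in_strip_general J h hh0 hh4 zF hzF lamP lamM hlamP hlamM
end

section
/- For every real x one has −i·Log(−i·tanh(x + iπ/4)) = −π/2 + 2·arctan(e^{−2x}), where Log denotes the principal branch of the complex logarithm; i.e., the one-particle momentum p satisfies p(x + iπ/4) = −π/2 + 2 arctan(e^{−2x}) and in particular is real on the line Im λ = π/4. -/
/-!
With `w = x + iπ/4` one has `e^{2w} = i e^{2x}`, so `tanh w = (e^{2w} - 1)/(e^{2w} + 1)` gives
`-i tanh w = -i (1 + iu)/(1 - iu)` for `u = e^{-2x}`. Since `(1 + it)/(1 - it) = e^{2i arctan t}`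
for real `t`, this is `e^{iθ}` with `θ = -π/2 + 2 arctan u ∈ (-π/2, π/2)`, where the principal
logarithm inverts `exp`.
-/

open Real

namespace Complex

theorem tanh_eq_exp_two_mul (z : ℂ) : tanh z = (exp (2 * z) - 1) / (exp (2 * z) + 1) := by
  rw [tanh_eq_sinh_div_cosh, sinh, cosh, div_div_div_cancel_right₀ two_ne_zero,
    ← mul_div_mul_left _ _ (exp_ne_zero z), mul_sub, mul_add, ← exp_add, ← exp_add,
    add_neg_cancel, exp_zero, two_mul]

theorem exp_two_mul_arctan_mul_I (t : ℝ) :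
    exp (2 * Real.arctan t * I) = (1 + t * I) / (1 - t * I) := by
  have hplus : 1 + (t : ℂ) * I ≠ 0 := fun h => by simpa using congrArg re h
  have hminus : 1 - (t : ℂ) * I ≠ 0 := fun h => by simpa using congrArg re h
  have hcoeff : 2 * (-I / 2) * I = 1 := by linear_combination -I_sq
  rw [ofReal_arctan, arctan, ← mul_assoc, mul_right_comm, hcoeff, one_mul,
    exp_log (div_ne_zero hplus hminus)]

theorem neg_I_mul_tanh_add_I_mul_pi_div_four (x : ℝ) :
    -I * tanh (x + I * π / 4) =
      exp (((-(π / 2) + 2 * Real.arctan (Real.exp (-2 * x)) : ℝ) : ℂ) * I) := by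
  set u := Real.exp (-2 * x)
  set a := Real.exp (2 * x)
  have hua : (u : ℂ) * a = 1 := by
    rw [← ofReal_mul, ← Real.exp_add]; simp
  have hexp : exp (2 * (x + I * π / 4)) = I * a := by
    rw [show 2 * ((x : ℂ) + I * π / 4) = 2 * x + π / 2 * I by ring, Complex.exp_add,
      exp_pi_div_two_mul_I, mul_comm, ofReal_exp, ofReal_mul, ofReal_ofNat]
  have hden : I * a + 1 ≠ 0 := fun h => by simpa using congrArg re h
  have hminus : 1 - (u : ℂ) * I ≠ 0 := fun h => by simpa using congrArg re h
  rw [tanh_eq_exp_two_mul, hexp, ofReal_add, add_mul, Complex.exp_add, ofReal_mul, ofReal_ofNat,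
    exp_two_mul_arctan_mul_I, ofReal_neg, neg_mul ((π / 2 : ℝ) : ℂ), Complex.exp_neg,
    ofReal_div, ofReal_ofNat, exp_pi_div_two_mul_I, inv_I, ← mul_div_assoc, ← mul_div_assoc,
    div_eq_div_iff hden hminus]
  linear_combination (-2 * I) * hua + 2 * I * a * u * I_sq

end Complex

/-- The one-particle momentum `p(λ) = −i Log(−i tanh λ)` of the XX chain is real on the
line `Im λ = π/4`, where it equals `−π/2 + 2 arctan(e^{−2x})`. -/
theorem momentum_on_upper_line :
    ∀ x : ℝ,
      -Complex.I * Complex.log (-Complex.I *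
          Complex.tanh ((x : ℂ) + Complex.I * (π : ℝ) / 4)) =
        ((-(π / 2) + 2 * Real.arctan (Real.exp (-2 * x)) : ℝ) : ℂ) := by
  intro x
  have harctan_pos : 0 < Real.arctan (Real.exp (-2 * x)) := Real.arctan_pos.2 (Real.exp_pos _)
  have harctan_lt := Real.arctan_lt_pi_div_two (Real.exp (-2 * x))
  rw [Complex.neg_I_mul_tanh_add_I_mul_pi_div_four,
    Complex.log_exp (by rw [Complex.mul_I_im, Complex.ofReal_re]; linarith)
      (by rw [Complex.mul_I_im, Complex.ofReal_re]; linarith)]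
  linear_combination
    -((-(π / 2) + 2 * Real.arctan (Real.exp (-2 * x)) : ℝ) : ℂ) * Complex.I_sq
end

section
/- Let J, h be real numbers with J > 0 and 0 < h < 4J, and set z_F = (1/2)·arcosh(4J/h), λ_F^− = iπ/4 − z_F. Then the value of the one-particle momentum at the left Fermi rapidity is the Fermi momentum: −i·Log(−i·tanh(iπ/4 − z_F)) = arccos(h/(4J)), a real number lying in (0, π/2). -/
/-!
With `w = iπ/4 - z_F` one has `exp (2w) = i·exp (-2 z_F)`, and `u = -i·tanh w` is recovered
from `exp (2w)` by inverting the Cayley transform `exp (2w) = (1 + i u) / (1 - i u)`.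
Writing `4J/h = 1 / cos θ` with `θ = arccos (h / 4J) ∈ (0, π/2)`, the definition of `arcosh`
gives
`exp (-2 z_F) = cos θ / (1 + sin θ) = tan (π/4 - θ/2)`, which is exactly the value making
`u = exp (iθ)`. Since `|θ| < π`, the principal logarithm returns `iθ`.
-/

open Real

namespace Complex

theorem tanh_eq_exp_two_mul_sub_one_div (w : ℂ) :
    tanh w = (exp (2 * w) - 1) / (exp (2 * w) + 1) := by
  rw [tanh_eq_sinh_div_cosh, sinh, cosh, div_div_div_cancel_right₀ two_ne_zero,
    ← mul_div_mul_left _ _ (exp_ne_zero w), two_mul, exp_add]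
  have h : exp w * exp (-w) = 1 := by rw [← exp_add, add_neg_cancel, exp_zero]
  congr 1
  · linear_combination -h
  · linear_combination h

theorem neg_I_mul_tanh_eq_of_exp_two_mul_mul_eq {w u : ℂ}
    (hw : exp (2 * w) * (1 - I * u) = 1 + I * u) : -I * tanh w = u := by
  have hE : exp (2 * w) + 1 ≠ 0 := fun h => by
    rw [eq_neg_of_add_eq_zero_left h] at hw
    exact two_ne_zero (by linear_combination -hw : (2 : ℂ) = 0)
  rw [tanh_eq_exp_two_mul_sub_one_div, ← mul_div_assoc, div_eq_iff hE]
  linear_combination -I * hw - u * (exp (2 * w) + 1) * I_sq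

theorem I_mul_cos_div_one_add_sin_mul_eq {θ : ℂ} (hθ : 1 + sin θ ≠ 0) :
    I * (cos θ / (1 + sin θ)) * (1 - I * exp (θ * I)) = 1 + I * exp (θ * I) := by
  rw [exp_mul_I]
  field_simp
  ring_nf
  rw [I_sq, I_pow_three]
  linear_combination sin_sq_add_cos_sq θ

theorem exp_two_mul_I_mul_pi_div_four_sub (z : ℂ) :
    exp (2 * (I * π / 4 - z)) = I * exp (-(2 * z)) := by
  rw [show 2 * (I * π / 4 - z) = π / 2 * I + -(2 * z) by ring, exp_add, exp_pi_div_two_mul_I]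

end Complex

theorem Real.exp_neg_arcosh_inv {x : ℝ} (hx : 0 < x) (hx1 : x ≤ 1) :
    exp (-Real.arcosh x⁻¹) = x / (1 + √(1 - x ^ 2)) := by
  have hsq : √(x⁻¹ ^ 2 - 1) = √(1 - x ^ 2) / x := by
    rw [show x⁻¹ ^ 2 - 1 = (1 - x ^ 2) / x ^ 2 by field_simp, sqrt_div' _ (sq_nonneg x),
      sqrt_sq hx.le]
  rw [exp_neg, exp_arcosh (one_le_inv₀ hx |>.mpr hx1), hsq]
  field_simp

/-- The value of the one-particle momentum `p(λ) = −i Log(−i tanh λ)` at the left Fermi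
rapidity `λ_F^− = iπ/4 − z_F`, `z_F = (1/2) arcosh(4J/h)`, is the Fermi momentum
`p_F = arccos(h/(4J)) ∈ (0, π/2)`. -/
theorem fermi_momentum (J h : ℝ) (hJ : 0 < J) (hh0 : 0 < h) (hh4 : h < 4 * J)
    (zF : ℝ) (hzF : zF = (1 / 2) * _root_.arcosh (4 * J / h)) :
    -Complex.I * Complex.log (-Complex.I *
        Complex.tanh (Complex.I * (π : ℝ) / 4 - (zF : ℂ))) =
      ((Real.arccos (h / (4 * J)) : ℝ) : ℂ) ∧
    0 < Real.arccos (h / (4 * J)) ∧ Real.arccos (h / (4 * J)) < π / 2 := by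
  have h4J : 0 < 4 * J := by positivity
  set x := h / (4 * J)
  have hx0 : 0 < x := div_pos hh0 h4J
  have hx1 : x < 1 := (div_lt_one h4J).mpr hh4
  set θ := arccos x
  have hθ0 : 0 < θ := arccos_pos.mpr hx1
  have hθπ : θ < π / 2 := arccos_lt_pi_div_two.mpr hx0
  -- `_root_.arcosh` unfolds to Mathlib's `Real.arcosh`
  have h2zF : 2 * zF = Real.arcosh x⁻¹ := by
    rw [hzF, inv_div, ← mul_assoc]
    norm_num
    rfl
  have hexp : exp (-(2 * zF)) = cos θ / (1 + sin θ) := by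
    rw [cos_arccos (by linarith) hx1.le, sin_arccos, h2zF, exp_neg_arcosh_inv hx0 hx1.le]
  have hsin : 1 + Complex.sin θ ≠ 0 := by
    exact_mod_cast (by linarith [sin_pos_of_pos_of_lt_pi hθ0 (by linarith)] : 1 + sin θ ≠ 0)
  have htanh : -Complex.I * Complex.tanh (Complex.I * (π : ℝ) / 4 - zF) =
      Complex.exp (θ * Complex.I) := by
    apply Complex.neg_I_mul_tanh_eq_of_exp_two_mul_mul_eq
    have hexpC : Complex.exp (-(2 * zF)) = Complex.cos θ / (1 + Complex.sin θ) := by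
      exact_mod_cast hexp
    rw [Complex.exp_two_mul_I_mul_pi_div_four_sub, hexpC]
    exact Complex.I_mul_cos_div_one_add_sin_mul_eq hsin
  refine ⟨?_, hθ0, hθπ⟩
  rw [htanh, Complex.log_exp (by simp; linarith [pi_pos]) (by simp; linarith)]
  linear_combination (-θ : ℂ) * Complex.I_sq
end

section
/- Let z₀ ∈ ℂ and 0 < r < r' be such that the closed disk of radius r' centered at z₀ is contained in the open strip {z : −π/4 < Im z < 3π/4}; let K be the circle {z : |z − z₀| = r} and K_per = ∪_{k∈ℤ}(K + ikπ). Suppose Ψ : ℂ → Mat₂(ℂ) satisfies: (i) each entry of Ψ is holomorphic on ℂ ∖ K_per; (ii) Ψ(z + iπ) = Ψ(z) for all z; (iii) there exist Ψ₊ continuous on the closed disk {|z − z₀| ≤ r} agreeing with Ψ on the open disk, and Ψ₋ continuous on the closed annulus {r ≤ |z − z₀| ≤ r'} agreeing with Ψ on {r < |z − z₀| ≤ r'}; (iv) there is G : K → Mat₂(ℂ) with det G(z) = 1 and Ψ₋(z) = Ψ₊(z)·G(z) for all z ∈ K; (v) Ψ(z) → I₂ (entrywise) as Re z → +∞ and Ψ(z)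 converges entrywise to some constant matrix as Re z → −∞. Then det Ψ(z) = 1 for every z ∈ ℂ ∖ K_per; in particular Ψ(z) is invertible at every such z. -/
/-!
Since `det G = 1` on `K`, the boundary values of `det Ψ` from inside and outside `K` agree, so they
glue to a function continuous across `K` and holomorphic off it. Such a function is holomorphic
across the circle: off the circle it equals its Cauchy integral over a larger concentric circle
(Cauchy–Goursat applied to `dslope` on the annulus and on the inner disc), hence everywhere by
continuity. Extending periodically gives an entire `iπ`-periodic function, which is bounded because
it has limits as `Re z → ±∞` and is continuous on a period rectangle. By Liouville it is constant,
equal to its limit `det I = 1` at `+∞`.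
-/

open Real Filter Metric Set Complex Function Topology

theorem differentiableOn_det_of_entries {𝕜 n : Type*} [NontriviallyNormedField 𝕜] [Fintype n]
    [DecidableEq n] {A : 𝕜 → Matrix n n 𝕜} {s : Set 𝕜}
    (h : ∀ i j, DifferentiableOn 𝕜 (fun z => A z i j) s) :
    DifferentiableOn 𝕜 (fun z => (A z).det) s := by
  simp only [Matrix.det_apply, Units.smul_def, zsmul_eq_mul]
  exact DifferentiableOn.fun_sum fun σ _ =>
    (differentiableOn_const _).mul (DifferentiableOn.fun_finsetProd fun i _ => h (σ i) i)

theorem tendsto_det_of_tendsto_entries {α n R : Type*} [Fintype n] [DecidableEq n] [CommRing R]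
    [TopologicalSpace R] [IsTopologicalRing R] {l : Filter α} {A : α → Matrix n n R}
    {M : Matrix n n R} (h : ∀ i j, Tendsto (fun x => A x i j) l (𝓝 (M i j))) :
    Tendsto (fun x => (A x).det) l (𝓝 M.det) :=
  (continuous_id.matrix_det.tendsto M).comp (tendsto_pi_nhds.2 fun i => tendsto_pi_nhds.2 (h i))

section Liouville

variable {E : Type*} [NormedAddCommGroup E] {F : ℂ → E} {T : ℝ} {a b : E}

theorem Continuous.isBounded_range_of_periodic_of_tendsto_re (hF : Continuous F) (hT : 0 < T)
    (hper : Periodic F (T * I)) (htop : Tendsto F (comap re atTop) (𝓝 a))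
    (hbot : Tendsto F (comap re atBot) (𝓝 b)) : Bornology.IsBounded (range F) := by
  have hfar : ∀ᶠ z in comap re (cocompact ℝ), ‖F z‖ ≤ max (‖a‖ + 1) (‖b‖ + 1) := by
    rw [cocompact_eq_atBot_atTop, comap_sup, eventually_sup]
    exact ⟨(hbot.norm.eventually_le_const (lt_add_one _)).mono fun _ h => h.trans (le_max_right ..),
      (htop.norm.eventually_le_const (lt_add_one _)).mono fun _ h => h.trans (le_max_left ..)⟩
  obtain ⟨t, ht, htF⟩ := mem_comap.1 hfar
  obtain ⟨L, hL, hLt⟩ := mem_cocompact.1 ht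
  obtain ⟨C, hC⟩ := (hL.reProdIm (isCompact_Icc (a := 0) (b := T))).exists_bound_of_continuousOn
    hF.continuousOn
  refine isBounded_iff_forall_norm_le.2 ⟨max C (max (‖a‖ + 1) (‖b‖ + 1)), ?_⟩
  rintro _ ⟨z, rfl⟩
  have hline : Periodic (fun y : ℝ => F (z.re + y * I)) T := fun y => by
    simpa [add_mul, add_assoc] using hper (z.re + y * I)
  obtain ⟨y, hy, hzy⟩ := hline.exists_mem_Ico₀ hT z.im
  rw [← re_add_im z, hzy]
  by_cases hzL : z.re ∈ L
  · exact (hC _ ⟨by simpa using hzL, by simpa using Ico_subset_Icc_self hy⟩).trans (le_max_left ..)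
  · exact (htF (hLt (by simpa using hzL))).trans (le_max_right ..)

theorem Differentiable.eq_of_periodic_of_tendsto_re [NormedSpace ℂ E] (hF : Differentiable ℂ F)
    (hT : 0 < T) (hper : Periodic F (T * I)) (htop : Tendsto F (comap re atTop) (𝓝 a))
    (hbot : Tendsto F (comap re atBot) (𝓝 b)) (z : ℂ) : F z = a := by
  obtain ⟨c, hc⟩ := hF.exists_const_forall_eq_of_bounded
    (hF.continuous.isBounded_range_of_periodic_of_tendsto_re hT hper htop hbot)
  have : (comap re atTop).NeBot := atTop_neBot.comap_of_surj re_surjective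
  rw [hc, tendsto_nhds_unique (tendsto_const_nhds.congr fun z => (hc z).symm) htop]

end Liouville

section RemovableCircle

variable {E : Type*} [NormedAddCommGroup E] [NormedSpace ℂ E] {f : ℂ → E} {c w : ℂ} {r R : ℝ}

theorem two_pi_I_inv_smul_circleIntegral_sub_inv_smul_of_circleIntegral_dslope_eq_zero
    [CompleteSpace E] (hw : w ∈ ball c R) (hc : ContinuousOn f (sphere c R))
    (h : ∮ z in C(c, R), dslope f w z = 0) :
    (2 * π * I : ℂ)⁻¹ • (∮ z in C(c, R), (z - w)⁻¹ • f z) = f w := by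
  have hR : 0 < R := dist_nonneg.trans_lt hw
  have hne : ∀ z ∈ sphere c R, z ≠ w := fun z hz => ne_of_mem_of_not_mem hz (ne_of_lt hw)
  have hinv : ContinuousOn (fun z => (z - w)⁻¹) (sphere c R) :=
    (continuousOn_id.sub continuousOn_const).inv₀ fun z hz => sub_ne_zero.2 (hne z hz)
  have hsplit : EqOn (dslope f w) (fun z => (z - w)⁻¹ • f z - (z - w)⁻¹ • f w) (sphere c R) :=
    fun z hz => by simp only [dslope_of_ne _ (hne z hz), slope_def_module, smul_sub]
  rw [circleIntegral.integral_congr hR.le hsplit,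
    circleIntegral.integral_sub (f := fun z => (z - w)⁻¹ • f z) (g := fun z => (z - w)⁻¹ • f w)
      ((hinv.smul hc).circleIntegrable hR.le)
      ((hinv.smul continuousOn_const).circleIntegrable hR.le),
    sub_eq_zero, circleIntegral.integral_smul_const,
    circleIntegral.integral_sub_inv_of_mem_ball hw] at h
  rw [h, smul_smul, inv_mul_cancel₀ two_pi_I_ne_zero, one_smul]

theorem circleIntegral_dslope_eq_zero_of_differentiableOn_diff_sphere (hr : 0 < r) (hrR : r ≤ R)
    (hc : ContinuousOn f (closedBall c R)) (hd : DifferentiableOn ℂ f (ball c R \ sphere c r))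
    (hw : w ∈ ball c R \ sphere c r) : ∮ z in C(c, R), dslope f w z = 0 := by
  have hopen : IsOpen (ball c R \ sphere c r) := isOpen_ball.sdiff isClosed_sphere
  have hcont : ContinuousOn (dslope f w) (closedBall c R) :=
    (continuousOn_dslope (closedBall_mem_nhds_of_mem hw.1)).2
      ⟨hc, hd.differentiableAt (hopen.mem_nhds hw)⟩
  have hdiff : ∀ z ∈ (ball c R \ sphere c r) \ {w}, DifferentiableAt ℂ (dslope f w) z :=
    fun z hz => (differentiableAt_dslope_of_ne hz.2).2 (hd.differentiableAt (hopen.mem_nhds hz.1))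
  have hannulus : ∮ z in C(c, R), dslope f w z = ∮ z in C(c, r), dslope f w z :=
    circleIntegral_eq_of_differentiable_on_annulus_off_countable hr hrR (countable_singleton w)
      (hcont.mono sdiff_subset) fun z hz =>
        hdiff z ⟨⟨hz.1.1, fun h => hz.1.2 (sphere_subset_closedBall h)⟩, hz.2⟩
  rw [hannulus]
  exact circleIntegral_eq_zero_of_differentiable_on_off_countable hr.le (countable_singleton w)
    (hcont.mono (closedBall_subset_closedBall hrR)) fun z hz =>
      hdiff z ⟨⟨ball_subset_ball hrR hz.1, fun h => (mem_ball.1 hz.1).ne (mem_sphere.1 h)⟩, hz.2⟩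

theorem differentiableOn_ball_of_differentiableOn_diff_sphere [CompleteSpace E] (hr : 0 < r)
    (hrR : r ≤ R) (hc : ContinuousOn f (closedBall c R))
    (hd : DifferentiableOn ℂ f (ball c R \ sphere c r)) : DifferentiableOn ℂ f (ball c R) := by
  have hR : 0 < R := hr.trans_le hrR
  set g : ℂ → E := fun w => (2 * π * I : ℂ)⁻¹ • ∮ z in C(c, R), (z - w)⁻¹ • f z
  have hg : DifferentiableOn ℂ g (ball c R) := by
    lift R to NNReal using hR.le
    rw [← eball_coe]
    exact (hasFPowerSeriesOn_cauchy_integral ((hc.mono sphere_subset_closedBall).circleIntegrable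
      hR.le) (by exact_mod_cast hR)).differentiableOn
  have hfg : EqOn f g (ball c R \ sphere c r) := fun w hw =>
    (two_pi_I_inv_smul_circleIntegral_sub_inv_smul_of_circleIntegral_dslope_eq_zero hw.1
      (hc.mono sphere_subset_closedBall)
      (circleIntegral_dslope_eq_zero_of_differentiableOn_diff_sphere hr hrR hc hd hw)).symm
  have hdense : ball c R ⊆ closure (ball c R \ sphere c r) :=
    (interior_eq_empty_iff_dense_compl.1 (interior_sphere c hr.ne')).open_subset_closure_inter
      isOpen_ball
  exact hg.congr (hfg.of_subset_closure (hc.mono ball_subset_closedBall) hg.continuousOn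
    sdiff_subset hdense)

end RemovableCircle

def openStrip : Set ℂ := {z : ℂ | -(π / 4) < z.im ∧ z.im < 3 * π / 4}

/-- `z - stripIndex z * iπ` is the representative of `z` in the fundamental strip
`S = {−π/4 ≤ Im z < 3π/4}` of the cylinder. -/
noncomputable def stripIndex (z : ℂ) : ℤ := ⌊(z.im + π / 4) / π⌋

theorem stripIndex_add_int_mul (z : ℂ) (k : ℤ) :
    stripIndex (z + k * π * I) = stripIndex z + k := by
  have : ((z + k * π * I).im + π / 4) / π = (z.im + π / 4) / π + k := by
    simp only [add_im, mul_im, mul_re, intCast_re, ofReal_re, intCast_im, ofReal_im, I_re, I_im]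
    field_simp
    ring
  rw [stripIndex, this, Int.floor_add_intCast, stripIndex]

theorem stripIndex_add_pi_mul_I (z : ℂ) : stripIndex (z + π * I) = stripIndex z + 1 := by
  simpa using stripIndex_add_int_mul z 1

theorem stripIndex_eq_zero {z : ℂ} (hz : z ∈ openStrip) : stripIndex z = 0 := by
  rw [stripIndex, Int.floor_eq_zero_iff]
  obtain ⟨h₁, h₂⟩ := hz
  constructor
  · rw [le_div_iff₀ pi_pos]; linarith
  · rw [div_lt_one pi_pos]; linarith

/-- The paper's `K_per` for the set `K`. -/
def iPiTranslates (K : Set ℂ) : Set ℂ := ⋃ k : ℤ, (fun z => z + (k : ℂ) * (π : ℝ) * I) '' K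

section iPiTranslates

variable {K : Set ℂ} {z : ℂ}

theorem mem_iPiTranslates : z ∈ iPiTranslates K ↔ ∃ k : ℤ, z - k * π * I ∈ K := by
  simp only [iPiTranslates, mem_iUnion, mem_image]
  constructor
  · rintro ⟨k, w, hw, rfl⟩
    exact ⟨k, by simpa using hw⟩
  · rintro ⟨k, hk⟩
    exact ⟨k, _, hk, sub_add_cancel _ _⟩

theorem subset_iPiTranslates : K ⊆ iPiTranslates K :=
  fun z hz => mem_iPiTranslates.2 ⟨0, by simpa using hz⟩

theorem add_pi_mul_I_mem_iPiTranslates : z + π * I ∈ iPiTranslates K ↔ z ∈ iPiTranslates K := by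
  simp only [mem_iPiTranslates]
  constructor
  · rintro ⟨k, hk⟩
    exact ⟨k - 1, by convert hk using 1; push_cast; ring⟩
  · rintro ⟨k, hk⟩
    exact ⟨k + 1, by convert hk using 1; push_cast; ring⟩

theorem isClosed_iPiTranslates (hK : IsCompact K) : IsClosed (iPiTranslates K) := by
  set e : ℂ → ℂ := fun z => Complex.exp (2 * z)
  have he : Continuous e := by fun_prop
  suffices iPiTranslates K = e ⁻¹' (e '' K) by
    rw [this]
    exact (hK.image he).isClosed.preimage he
  ext z
  simp only [e, mem_iPiTranslates, mem_preimage, mem_image, exp_eq_exp_iff_exists_int]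
  constructor
  · rintro ⟨k, hk⟩
    exact ⟨_, hk, -k, by push_cast; ring⟩
  · rintro ⟨w, hw, n, hn⟩
    exact ⟨-n, by convert hw using 1; push_cast; linear_combination -hn / 2⟩

theorem mem_iPiTranslates_iff_mem (hK : K ⊆ openStrip) (hz : z ∈ openStrip) :
    z ∈ iPiTranslates K ↔ z ∈ K := by
  refine ⟨fun h => ?_, fun h => subset_iPiTranslates h⟩
  obtain ⟨k, hk⟩ := mem_iPiTranslates.1 h
  have := stripIndex_add_int_mul (z - k * π * I) k
  rw [sub_add_cancel, stripIndex_eq_zero hz, stripIndex_eq_zero (hK hk)] at this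
  obtain rfl : k = 0 := by omega
  simpa using hk

theorem compl_iPiTranslates_mem_comap_re_cocompact (hK : IsCompact K) :
    (iPiTranslates K)ᶜ ∈ comap re (cocompact ℝ) := by
  refine mem_comap.2 ⟨(re '' K)ᶜ, (hK.image continuous_re).compl_mem_cocompact, ?_⟩
  intro z hz hzK
  obtain ⟨k, hk⟩ := mem_iPiTranslates.1 hzK
  exact hz ⟨_, hk, by simp⟩

end iPiTranslates

theorem exists_continuousOn_closedBall_eqOn_diff_sphere {X : Type*} [TopologicalSpace X]
    {D fi fo : ℂ → X} {z₀ : ℂ} {r r' : ℝ} (hfi : ContinuousOn fi (closedBall z₀ r))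
    (hfiD : EqOn fi D (ball z₀ r)) (hfo : ContinuousOn fo {z | r ≤ dist z z₀ ∧ dist z z₀ ≤ r'})
    (hfoD : EqOn fo D (ball z₀ r' \ closedBall z₀ r)) (hjump : EqOn fi fo (sphere z₀ r)) :
    ∃ g, ContinuousOn g (closedBall z₀ r') ∧ EqOn g D (ball z₀ r' \ sphere z₀ r) := by
  classical
  refine ⟨(closedBall z₀ r).piecewise fi fo, ?_, ?_⟩
  · have hcover : closedBall z₀ r' ⊆ closedBall z₀ r ∪ {z | r ≤ dist z z₀ ∧ dist z z₀ ≤ r'} :=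
      fun z hz => (le_or_gt (dist z z₀) r).imp id fun h => ⟨h.le, hz⟩
    refine ContinuousOn.mono ?_ hcover
    refine (hfi.congr fun z hz => piecewise_eq_of_mem _ _ _ hz).union_of_isClosed
      (hfo.congr fun z hz => ?_) isClosed_closedBall ?_
    · rcases hz.1.eq_or_lt with h | h
      · rw [piecewise_eq_of_mem _ _ _ (mem_closedBall.2 h.ge), hjump (mem_sphere.2 h.symm)]
      · exact piecewise_eq_of_notMem _ _ _ (not_le.2 h)
    · exact (isClosed_le continuous_const (continuous_id.dist continuous_const)).inter
        (isClosed_le (continuous_id.dist continuous_const) continuous_const)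
  · rintro z ⟨hz, hzK⟩
    rcases (Ne.lt_or_gt hzK : dist z z₀ < r ∨ r < dist z z₀) with h | h
    · rw [piecewise_eq_of_mem _ _ _ (mem_closedBall.2 h.le), hfiD h]
    · have hzr : z ∉ closedBall z₀ r := not_le.2 h
      rw [piecewise_eq_of_notMem _ _ _ hzr, hfoD ⟨hz, hzr⟩]

theorem exists_differentiable_periodic_extension {E : Type*} [NormedAddCommGroup E]
    [NormedSpace ℂ E] [CompleteSpace E] {z₀ : ℂ} {r r' : ℝ} (hr : 0 < r) (hrr' : r < r')
    (hstrip : closedBall z₀ r' ⊆ openStrip) {D g : ℂ → E}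
    (hD : DifferentiableOn ℂ D (iPiTranslates (sphere z₀ r))ᶜ) (hper : Periodic D (π * I))
    (hg : ContinuousOn g (closedBall z₀ r')) (hgD : EqOn g D (ball z₀ r' \ sphere z₀ r)) :
    ∃ F : ℂ → E, Differentiable ℂ F ∧ Periodic F (π * I) ∧
      EqOn F D (iPiTranslates (sphere z₀ r))ᶜ := by
  classical
  set P := iPiTranslates (sphere z₀ r)
  have hP : IsClosed P := isClosed_iPiTranslates (isCompact_sphere z₀ r)
  have hPball : ∀ z ∈ ball z₀ r', z ∈ P ↔ z ∈ sphere z₀ r := fun z hz =>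
    mem_iPiTranslates_iff_mem
      ((sphere_subset_ball hrr').trans (ball_subset_closedBall.trans hstrip))
      (hstrip (ball_subset_closedBall hz))
  have hg' : DifferentiableOn ℂ g (ball z₀ r') :=
    differentiableOn_ball_of_differentiableOn_diff_sphere hr hrr'.le hg
      ((hD.mono fun z hz => (hPball z hz.1).not.2 hz.2).congr hgD)
  set F : ℂ → E := fun z => if z ∈ P then g (z - stripIndex z * π * I) else D z
  have hFD : EqOn F D Pᶜ := fun z hz => if_neg hz
  have hFg : EqOn F g (ball z₀ r') := fun z hz => by
    by_cases hzP : z ∈ P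
    · simp [F, hzP, stripIndex_eq_zero (hstrip (ball_subset_closedBall hz))]
    · rw [hFD hzP, hgD ⟨hz, (hPball z hz).not.1 hzP⟩]
  have hFper : Periodic F (π * I) := fun z => by
    have harg : z + π * I - stripIndex (z + π * I) * π * I = z - stripIndex z * π * I := by
      rw [stripIndex_add_pi_mul_I]
      push_cast
      ring
    simp only [F, P, harg, hper z, add_pi_mul_I_mem_iPiTranslates]
  refine ⟨F, fun z => ?_, hFper, hFD⟩
  by_cases hz : z ∈ P
  · obtain ⟨k, hk⟩ := mem_iPiTranslates.1 hz
    have hw : z - k * π * I ∈ ball z₀ r' := sphere_subset_ball hrr' hk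
    have hFk : (fun w => F (w - k * π * I)) = F :=
      funext fun w => by simpa [mul_assoc] using (hFper.int_mul k).sub_eq w
    rw [← hFk, differentiableAt_comp_sub]
    exact (hg'.differentiableAt (isOpen_ball.mem_nhds hw)).congr_of_eventuallyEq
      (eventuallyEq_of_mem (isOpen_ball.mem_nhds hw) hFg)
  · exact (hD.differentiableAt (hP.isOpen_compl.mem_nhds hz)).congr_of_eventuallyEq
      (eventuallyEq_of_mem (hP.isOpen_compl.mem_nhds hz) hFD)

/-- A solution of the matrix Riemann–Hilbert problem on the cylinder
`S = {−π/4 ≤ Im z < 3π/4}` with unimodular jump matrix on the circle `K` has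
determinant identically `1`; in particular it is everywhere invertible. -/
theorem rhp_unimodular_det_one (z₀ : ℂ) (r r' : ℝ) (hr : 0 < r) (hrr' : r < r')
    (hstrip : closedBall z₀ r' ⊆ {z : ℂ | -(π / 4) < z.im ∧ z.im < 3 * π / 4})
    (K Kper : Set ℂ) (hK : K = sphere z₀ r)
    (hKper : Kper = ⋃ k : ℤ, (fun z => z + (k : ℂ) * (π : ℝ) * Complex.I) '' K)
    (Ψ : ℂ → Matrix (Fin 2) (Fin 2) ℂ)
    (hol : ∀ i j, DifferentiableOn ℂ (fun z => Ψ z i j) Kperᶜ)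
    (per : ∀ z, Ψ (z + (π : ℝ) * Complex.I) = Ψ z)
    (Ψp Ψm : ℂ → Matrix (Fin 2) (Fin 2) ℂ)
    (hΨp_cont : ContinuousOn Ψp (closedBall z₀ r))
    (hΨp_eq : ∀ z ∈ ball z₀ r, Ψp z = Ψ z)
    (hΨm_cont : ContinuousOn Ψm {z : ℂ | r ≤ dist z z₀ ∧ dist z z₀ ≤ r'})
    (hΨm_eq : ∀ z : ℂ, r < dist z z₀ → dist z z₀ ≤ r' → Ψm z = Ψ z)
    (G : ℂ → Matrix (Fin 2) (Fin 2) ℂ)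
    (hG : ∀ z ∈ K, (G z).det = 1)
    (jump : ∀ z ∈ K, Ψm z = Ψp z * G z)
    (limPlus : ∀ i j, Tendsto (fun z => Ψ z i j) (comap Complex.re atTop)
      (nhds ((1 : Matrix (Fin 2) (Fin 2) ℂ) i j)))
    (limMinus : ∃ M : Matrix (Fin 2) (Fin 2) ℂ, ∀ i j,
      Tendsto (fun z => Ψ z i j) (comap Complex.re atBot) (nhds (M i j))) :
    ∀ z ∉ Kper, (Ψ z).det = 1 := by
  subst hK hKper
  have hjump : EqOn (fun z => (Ψp z).det) (fun z => (Ψm z).det) (sphere z₀ r) := fun z hz => by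
    simp only [jump z hz, Matrix.det_mul, hG z hz, mul_one]
  obtain ⟨g, hg, hgD⟩ := exists_continuousOn_closedBall_eqOn_diff_sphere (D := fun z => (Ψ z).det)
    (continuous_id.matrix_det.comp_continuousOn hΨp_cont)
    (fun z hz => congrArg Matrix.det (hΨp_eq z hz))
    (continuous_id.matrix_det.comp_continuousOn hΨm_cont)
    (fun z hz => congrArg Matrix.det (hΨm_eq z (not_le.1 hz.2) (mem_ball.1 hz.1).le)) hjump
  obtain ⟨F, hF, hFper, hFD⟩ := exists_differentiable_periodic_extension hr hrr' hstrip
    (differentiableOn_det_of_entries hol) (fun z => by simp only [per]) hg hgD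
  have hfar : ∀ l ≤ cocompact ℝ, F =ᶠ[comap re l] fun z => (Ψ z).det := fun l hl =>
    eventuallyEq_of_mem
      (comap_mono hl (compl_iPiTranslates_mem_comap_re_cocompact (isCompact_sphere z₀ r))) hFD
  obtain ⟨M, hM⟩ := limMinus
  have htop := (tendsto_det_of_tendsto_entries limPlus).congr' (hfar _ atTop_le_cocompact).symm
  have hbot := (tendsto_det_of_tendsto_entries hM).congr' (hfar _ atBot_le_cocompact).symm
  intro z hz
  exact (hFD hz).symm.trans
    ((hF.eq_of_periodic_of_tendsto_re pi_pos hFper htop hbot z).trans Matrix.det_one)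
end

section
/- Let f : ℂ → ℂ be entire with f(z + iπ) = f(z) for all z ∈ ℂ. Suppose f(z) → 1 as Re z → +∞ (i.e., f tends to 1 along the filter comap(Re, atTop)) and f(z) converges to some limit L ∈ ℂ as Re z → −∞ (along comap(Re, atBot)). Then f(z) = 1 for all z ∈ ℂ (and in particular L = 1). -/
/-!
Periodicity in the imaginary direction reduces the range of `f` to its values on the strip
`0 ≤ Im z < π`. Near either end of the strip `f` is close to its limit, and the middle part of the
strip is compact, so `f` is bounded. By Liouville's theorem `f` is constant, and the limit at
`Re z → +∞` identifies the constant as `1`.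
-/

open Real Filter

namespace Complex

open Set Bornology Function

lemma exists_im_mem_Ico_apply_eq_of_periodic {α : Type*} {f : ℂ → α} {T : ℝ}
    (hf : Periodic f (T * I)) (hT : 0 < T) (z : ℂ) :
    ∃ w : ℂ, w.re = z.re ∧ w.im ∈ Ico 0 T ∧ f w = f z := by
  have hline : Periodic (fun t : ℝ => f (z.re + t * I)) T := fun t => by
    simpa only [ofReal_add, add_mul, add_assoc] using hf (z.re + t * I)
  obtain ⟨y, hy, hfy⟩ := hline.exists_mem_Ico₀ hT z.im
  exact ⟨z.re + y * I, by simp, by simpa using hy, by rw [← hfy, re_add_im]⟩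

lemma isBounded_range_of_periodic_of_tendsto {E : Type*} [PseudoMetricSpace E] {f : ℂ → E}
    {T : ℝ} {a b : E} (hc : Continuous f) (hf : Periodic f (T * I)) (hT : 0 < T)
    (ha : Tendsto f (comap re atTop) (nhds a)) (hb : Tendsto f (comap re atBot) (nhds b)) :
    IsBounded (range f) := by
  obtain ⟨s, hs, hfs⟩ := Metric.exists_isBounded_image_of_tendsto ha
  obtain ⟨t, ht, hft⟩ := Metric.exists_isBounded_image_of_tendsto hb
  obtain ⟨A, -, hA⟩ := (atTop_basis.comap re).mem_iff.mp hs
  obtain ⟨B, -, hB⟩ := (atBot_basis.comap re).mem_iff.mp ht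
  have hK : IsCompact (Icc B A ×ℂ Icc 0 T) := isCompact_Icc.reProdIm isCompact_Icc
  refine ((hfs.union hft).union (hK.image hc).isBounded).subset ?_
  rintro _ ⟨z, rfl⟩
  obtain ⟨w, -, hw, hfw⟩ := exists_im_mem_Ico_apply_eq_of_periodic hf hT z
  rw [← hfw]
  rcases le_total A w.re with hAw | hwA
  · exact .inl <| .inl <| mem_image_of_mem f (hA hAw)
  rcases le_total w.re B with hwB | hBw
  · exact .inl <| .inr <| mem_image_of_mem f (hB hwB)
  · exact .inr <| mem_image_of_mem f (mem_reProdIm.mpr ⟨⟨hBw, hwA⟩, Ico_subset_Icc_self hw⟩)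

end Complex

/-- Liouville on the cylinder `ℂ/(iπℤ)`: an `iπ`-periodic entire function which tends to `1`
as `Re z → +∞` and has a limit as `Re z → −∞` is identically `1`. -/
theorem cylinder_liouville (f : ℂ → ℂ) (hf : Differentiable ℂ f)
    (per : ∀ z : ℂ, f (z + (π : ℝ) * Complex.I) = f z)
    (limPlus : Tendsto f (comap Complex.re atTop) (nhds 1))
    (limMinus : ∃ L : ℂ, Tendsto f (comap Complex.re atBot) (nhds L)) :
    ∀ z : ℂ, f z = 1 := by
  obtain ⟨L, limMinus⟩ := limMinus
  obtain ⟨c, hc⟩ := hf.exists_const_forall_eq_of_bounded <|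
    Complex.isBounded_range_of_periodic_of_tendsto hf.continuous per pi_pos limPlus limMinus
  have : (comap Complex.re atTop).NeBot := atTop_neBot.comap_of_surj Complex.re_surjective
  have hc1 : c = 1 := tendsto_nhds_unique (tendsto_const_nhds.congr fun z => (hc z).symm) limPlus
  simpa [hc1] using hc
end

section
/- Let c be a real number with 0 < c < 1, let R > 1, and for n ∈ ℤ define b_n(w) = (w^{−n}/(2πc))·((w − i)/(w + i) − 2cw/(w + i)²). Then the counterclockwise contour integral over the circle of radius R centered at 0 equals ∮_{|w|=R} b_n(w) dw = (i^n/c)·v(n), where v(n) = 0 for n ≥ 2, v(1) = 1, and v(n) = 2 − 2ic(1 − n) for n ≤ 0. Consequently, the moments of the high-temperature analysis at τ = 0 are A^l_k(m)|_{τ=0} = −(i^{m−k−l}/c)·v(m−k−l), i.e. they equal −(i^{m−k−l}/c) times (0 if k+l < m−1, 1 if k+l = m−1, and 2 − 2ic(k+l−m+1) if k+l > m−1). -/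
/-!
Both poles of `b_n`, at `0` and at `-i`, lie inside the circle `|w| = R`. For `n ≥ 1` the
integrand is holomorphic outside the unit disc and `w · b_n(w)` has a limit at infinity, so the
integral is `2πi` times that limit (a residue at infinity): `1/(2πc)` for `n = 1` and `0` for
`n ≥ 2`. For `n ≤ 0` the only pole is the double pole at `-i`, where
`b_n(w) = q(w) / (w + i)²` with the polynomial `q(w) = w^{-n} (w² - 2cw + 1) / (2πc)`, and
Cauchy's formula gives `2πi q'(-i)`. The moments `A^l_k(m)` are the case `n = m - k - l`.
-/

open Real Complex Metric Filter Topology Bornology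

section residueAtInfinity

variable {E : Type*} [NormedAddCommGroup E] [NormedSpace ℂ E]

theorem circleIntegral_eq_zero_of_tendsto_smul_cobounded {f : ℂ → E} {R : ℝ} (hR : 0 < R)
    (hf : DifferentiableOn ℂ f {w | R ≤ ‖w‖})
    (hf0 : Tendsto (fun w => w • f w) (cobounded ℂ) (𝓝 0)) :
    (∮ w in C(0, R), f w) = 0 := by
  -- The integral does not depend on the radius, and on the circle of radius `ρ` it is bounded
  -- by `2π · sup ‖w • f w‖`, which is small for `ρ` large.
  refine norm_le_zero_iff.mp (le_of_forall_pos_le_add fun ε hε => ?_)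
  obtain ⟨S, -, hS⟩ := (hasBasis_cobounded_compl_closedBall (0 : ℂ)).eventually_iff.mp
    (hf0.eventually (closedBall_mem_nhds 0 (div_pos hε two_pi_pos)))
  set ρ := max R S + 1
  have hRρ : R ≤ ρ := by linarith [le_max_left R S]
  have hρ : 0 < ρ := by linarith
  have h_annulus : (∮ w in C(0, ρ), f w) = ∮ w in C(0, R), f w := by
    refine circleIntegral_eq_of_differentiable_on_annulus_off_countable hR hRρ
      Set.countable_empty (hf.continuousOn.mono fun w hw => ?_) fun w hw => ?_
    · simpa using hw.2
    · have hRw : R < ‖w‖ := by simpa using hw.1.2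
      exact hf.differentiableAt <| mem_of_superset
        ((isOpen_lt continuous_const continuous_norm).mem_nhds hRw) fun _ h =>
          Set.mem_ofPred.2 h.le
  have h_bound : ∀ w ∈ sphere (0 : ℂ) ρ, ‖f w‖ ≤ ε / (2 * π) / ρ := by
    intro w hw
    have hw' : ‖w‖ = ρ := by simpa using hw
    have := @hS w (by simp [hw']; linarith [le_max_right R S])
    rw [dist_zero_right, norm_smul, hw'] at this
    rwa [le_div_iff₀ hρ, mul_comm]
  calc ‖∮ w in C(0, R), f w‖ = ‖∮ w in C(0, ρ), f w‖ := by rw [h_annulus]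
    _ ≤ 2 * π * ρ * (ε / (2 * π) / ρ) :=
      circleIntegral.norm_integral_le_of_norm_le_const hρ.le h_bound
    _ = 0 + ε := by field_simp; ring

theorem circleIntegral_eq_of_tendsto_smul_cobounded [CompleteSpace E] {f : ℂ → E} {R : ℝ}
    {a : E} (hR : 0 < R) (hf : DifferentiableOn ℂ f {w | R ≤ ‖w‖})
    (ha : Tendsto (fun w => w • f w) (cobounded ℂ) (𝓝 a)) :
    (∮ w in C(0, R), f w) = (2 * π * I) • a := by
  have h_sphere : sphere (0 : ℂ) R ⊆ {w | R ≤ ‖w‖} := fun w hw => by simp_all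
  have h_inv : DifferentiableOn ℂ (fun w : ℂ => w⁻¹ • a) {w | R ≤ ‖w‖} :=
    (differentiableOn_inv.mono fun w hw h => by simp_all; linarith).smul_const a
  have h_rem : (∮ w in C(0, R), (f w - w⁻¹ • a)) = 0 := by
    refine circleIntegral_eq_zero_of_tendsto_smul_cobounded hR (hf.sub h_inv) ?_
    refine (sub_self a ▸ ha.sub_const a).congr' ?_
    filter_upwards [eventually_cobounded_le_norm 1] with w hw
    have hw0 : w ≠ 0 := norm_pos_iff.mp (by linarith)
    rw [smul_sub, smul_smul, mul_inv_cancel₀ hw0, one_smul]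
  have h_log : (∮ w in C(0, R), w⁻¹) = 2 * π * I := by
    simpa using circleIntegral.integral_sub_inv_of_mem_ball (mem_ball_self (x := (0 : ℂ)) hR)
  rwa [circleIntegral.integral_sub
    ((hf.continuousOn.mono h_sphere).circleIntegrable hR.le)
    ((h_inv.continuousOn.mono h_sphere).circleIntegrable hR.le), sub_eq_zero,
    circleIntegral.integral_smul_const, h_log] at h_rem

end residueAtInfinity

lemma add_I_ne_zero_of_one_lt_norm {w : ℂ} (hw : 1 < ‖w‖) : w + I ≠ 0 := by
  intro h
  rw [add_eq_zero_iff_eq_neg.mp h] at hw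
  simp at hw

noncomputable def momentIntegrand (c : ℝ) (n : ℤ) (w : ℂ) : ℂ :=
  w ^ (-n) / (2 * (π : ℝ) * (c : ℂ)) * ((w - I) / (w + I) - 2 * (c : ℂ) * w / (w + I) ^ 2)

section momentIntegrand

variable {c R : ℝ}

lemma momentIntegrand_eq {w : ℂ} (hw : w + I ≠ 0) (n : ℤ) :
    momentIntegrand c n w =
      ((w + I) ^ 2)⁻¹ *
        ((2 * (π : ℝ) * (c : ℂ))⁻¹ * (w ^ (-n) * (w ^ 2 - 2 * c * w + 1))) := by
  rw [momentIntegrand, div_eq_mul_inv (w ^ (-n))]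
  generalize (2 * (π : ℝ) * (c : ℂ))⁻¹ = K
  field_simp
  linear_combination -(w ^ (-n) * K) * I_sq

lemma differentiableOn_momentIntegrand (hR : 1 < R) (n : ℤ) :
    DifferentiableOn ℂ (momentIntegrand c n) {w | R ≤ ‖w‖} := by
  intro w hw
  have h1 : 1 < ‖w‖ := hR.trans_le hw
  have hw0 : w ≠ 0 := norm_pos_iff.mp (by linarith)
  have hwI := add_I_ne_zero_of_one_lt_norm h1
  unfold momentIntegrand
  apply DifferentiableAt.differentiableWithinAt
  fun_prop (disch := simp [hw0, hwI])

lemma tendsto_mul_momentIntegrand (k : ℕ) :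
    Tendsto (fun w => w * momentIntegrand c (k + 1) w) (cobounded ℂ)
      (𝓝 ((2 * (π : ℝ) * (c : ℂ))⁻¹ * 0 ^ k)) := by
  set φ : ℂ → ℂ := fun u =>
    (2 * (π : ℝ) * (c : ℂ))⁻¹ * (u ^ k * (1 - 2 * c * u + u ^ 2)) / (1 + I * u) ^ 2
  have hφ : ContinuousAt φ 0 := by
    unfold φ
    fun_prop (disch := simp)
  have h0 : φ 0 = (2 * (π : ℝ) * (c : ℂ))⁻¹ * 0 ^ k := by simp [φ]
  refine (h0 ▸ hφ.tendsto.comp tendsto_inv₀_cobounded).congr' ?_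
  filter_upwards [eventually_cobounded_le_norm 2] with w hw
  have hw0 : w ≠ 0 := norm_pos_iff.mp (by linarith)
  have hwI := add_I_ne_zero_of_one_lt_norm (by linarith : 1 < ‖w‖)
  simp only [Function.comp, φ, momentIntegrand_eq hwI]
  rw [zpow_neg, ← Nat.cast_add_one, zpow_natCast, inv_pow, pow_succ w k]
  generalize (2 * (π : ℝ) * (c : ℂ))⁻¹ = K
  field_simp

lemma circleIntegral_momentIntegrand_natCast_add_one (hR : 1 < R) (k : ℕ) :
    (∮ w in C(0, R), momentIntegrand c (k + 1) w) = I / c * 0 ^ k := by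
  rw [circleIntegral_eq_of_tendsto_smul_cobounded (by linarith)
    (differentiableOn_momentIntegrand hR _) (tendsto_mul_momentIntegrand k), smul_eq_mul]
  have hπ : (π : ℂ) ≠ 0 := ofReal_ne_zero.mpr pi_ne_zero
  rw [mul_inv, mul_inv]
  field_simp

lemma circleIntegral_momentIntegrand_neg_natCast (hc : c ≠ 0) (hR : 1 < R) (m : ℕ) :
    (∮ w in C(0, R), momentIntegrand c (-m) w) = (-I) ^ m / c * (2 - 2 * I * c * (1 + m)) := by
  set K : ℂ := (2 * (π : ℝ) * (c : ℂ))⁻¹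
  set q : ℂ → ℂ := fun w => K * (w ^ m * (w ^ 2 - 2 * c * w + 1))
  have hq : ∀ w, HasDerivAt q (K * (m * w ^ (m - 1) * (w ^ 2 - 2 * c * w + 1)
      + w ^ m * (2 * w - 2 * c))) w := fun w => by
    have hP : HasDerivAt (fun w : ℂ => w ^ 2 - 2 * c * w + 1) (2 * w - 2 * c) w := by
      simpa using
        ((hasDerivAt_pow 2 w).sub ((hasDerivAt_id w).const_mul (2 * (c : ℂ)))).add_const 1
    exact ((hasDerivAt_pow m w).mul hP).const_mul K
  have h_cauchy := two_pi_I_inv_smul_circleIntegral_sub_sq_inv_smul_of_differentiable isOpen_univ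
    (Set.subset_univ (closedBall 0 R)) (fun w _ => (hq w).differentiableAt.differentiableWithinAt)
    (show -I ∈ ball (0 : ℂ) R by simpa using hR)
  have h_congr : Set.EqOn (momentIntegrand c (-m)) (fun w => ((w - -I) ^ 2)⁻¹ • q w)
      (sphere 0 R) := by
    intro w hw
    have hw' : 1 < ‖w‖ := by rwa [mem_sphere_zero_iff_norm.mp hw]
    rw [momentIntegrand_eq (add_I_ne_zero_of_one_lt_norm hw')]
    simp [q, K]
  rw [circleIntegral.integral_congr (by linarith) h_congr]
  rw [(hq (-I)).deriv, smul_eq_mul, inv_mul_eq_iff_eq_mul₀ two_pi_I_ne_zero] at h_cauchy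
  have h_pow : (m : ℂ) * (-I) ^ (m - 1) * I = -(m * (-I) ^ m) := by
    rcases m with _ | m
    · simp
    · rw [Nat.add_sub_cancel, pow_succ]
      ring
  have hπ : (π : ℂ) ≠ 0 := ofReal_ne_zero.mpr pi_ne_zero
  have hc' : (c : ℂ) ≠ 0 := ofReal_ne_zero.mpr hc
  rw [h_cauchy]
  simp only [K]
  field_simp
  linear_combination (I * (m * (-I) ^ (m - 1)) - 2 * (-I) ^ m) * I_sq + 2 * c * I * h_pow

end momentIntegrand

theorem moments_at_tau_zero_general (c : ℝ) (hc0 : 0 < c) (R : ℝ) (hR : 1 < R)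
    (b : ℤ → ℂ → ℂ)
    (hb : ∀ n : ℤ, ∀ w : ℂ, b n w =
      w ^ (-n) / (2 * (π : ℝ) * (c : ℂ)) *
        ((w - Complex.I) / (w + Complex.I) - 2 * (c : ℂ) * w / (w + Complex.I) ^ 2))
    (v : ℤ → ℂ)
    (hv : ∀ n : ℤ, v n =
      if 2 ≤ n then 0 else if n = 1 then 1
      else 2 - 2 * Complex.I * (c : ℂ) * (1 - (n : ℂ))) :
    (∀ n : ℤ, (∮ w in C(0, R), b n w) = Complex.I ^ n / (c : ℂ) * v n) ∧
    (∀ m k l : ℕ,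
      -(∮ w in C(0, R), b ((m : ℤ) - k - l) w) =
        -(Complex.I ^ ((m : ℤ) - k - l) / (c : ℂ)) *
          (if (k : ℤ) + l < (m : ℤ) - 1 then 0
           else if (k : ℤ) + l = (m : ℤ) - 1 then 1
           else 2 - 2 * Complex.I * (c : ℂ) * ((k : ℂ) + l - m + 1))) := by
  obtain rfl : b = momentIntegrand c := funext fun n => funext (hb n)
  have h_integral : ∀ n : ℤ, (∮ w in C(0, R), momentIntegrand c n w) = I ^ n / c * v n := by
    intro n
    rw [hv n]
    split_ifs with h2 h1
    · obtain ⟨k, rfl⟩ : ∃ k : ℕ, n = (k + 1 : ℕ) := ⟨(n - 1).toNat, by omega⟩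
      rw [Nat.cast_add_one, circleIntegral_momentIntegrand_natCast_add_one hR,
        zero_pow (by omega), mul_zero, mul_zero]
    · subst h1
      simpa using circleIntegral_momentIntegrand_natCast_add_one (c := c) hR 0
    · obtain ⟨m, rfl⟩ : ∃ m : ℕ, n = -m := ⟨(-n).toNat, by omega⟩
      rw [circleIntegral_momentIntegrand_neg_natCast hc0.ne' hR, zpow_neg, zpow_natCast,
        ← inv_pow, inv_I]
      push_cast
      ring
  refine ⟨h_integral, fun m k l => ?_⟩
  rw [h_integral, hv, neg_mul]
  congr 2
  split_ifs <;> first | omega | (push_cast; ring)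

/-- Moments of the high-temperature analysis at `τ = 0`: the counterclockwise circle
integrals of `b_n(w) = (w^{−n}/(2πc))·((w−i)/(w+i) − 2cw/(w+i)²)` over `|w| = R > 1`,
and the resulting values of the moments `A^l_k(m)|_{τ=0}` (which are minus these
integrals, since `Γ_p` is clockwise oriented). -/
theorem moments_at_tau_zero (c : ℝ) (hc0 : 0 < c) (hc1 : c < 1) (R : ℝ) (hR : 1 < R)
    (b : ℤ → ℂ → ℂ)
    (hb : ∀ n : ℤ, ∀ w : ℂ, b n w =
      w ^ (-n) / (2 * (π : ℝ) * (c : ℂ)) *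
        ((w - Complex.I) / (w + Complex.I) - 2 * (c : ℂ) * w / (w + Complex.I) ^ 2))
    (v : ℤ → ℂ)
    (hv : ∀ n : ℤ, v n =
      if 2 ≤ n then 0 else if n = 1 then 1
      else 2 - 2 * Complex.I * (c : ℂ) * (1 - (n : ℂ))) :
    (∀ n : ℤ, (∮ w in C(0, R), b n w) = Complex.I ^ n / (c : ℂ) * v n) ∧
    (∀ m k l : ℕ,
      -(∮ w in C(0, R), b ((m : ℤ) - k - l) w) =
        -(Complex.I ^ ((m : ℤ) - k - l) / (c : ℂ)) *
          (if (k : ℤ) + l < (m : ℤ) - 1 then 0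
           else if (k : ℤ) + l = (m : ℤ) - 1 then 1
           else 2 - 2 * Complex.I * (c : ℂ) * ((k : ℂ) + l - m + 1))) :=
  moments_at_tau_zero_general c hc0 R hR b hb v hv
end

section
/- Let p be a real number with sin p ≠ 0, set c = cos p, and let T be the 2×2 complex matrix T = [[0, 1], [1, 2ic]]. Then for every integer m ≥ 0, the scalar (1, −1)·T^m·(1, 2ic − 1)ᵗ equals 2·i^m·( sin((m+1)p)/sin p − i·cos((m+1)p) ). In particular, for p ∈ (0, π/2) this quantity is never zero, since sin((m+1)p) and cos((m+1)p) have no common zero. -/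
/-!
Both sides satisfy the recursion `x (n + 2) = 2 i cos p · x (n + 1) + x n`. For the pairing this
is Cayley–Hamilton for `T`, whose trace is `2 i cos p` and whose determinant is `-1`. For the
closed form, the factor `i ^ n` turns it into the Chebyshev recursion
`y (n + 2) = 2 cos p · y (n + 1) - y n`, satisfied by `sin ((n + 1) p)` and `cos ((n + 1) p)`.
The two sequences agree at `n = 0, 1`, hence everywhere. The closed form does not vanish because
its bracket has real part `sin ((m + 1) p) / sin p` and imaginary part `-cos ((m + 1) p)`.
-/

open Real Matrix

theorem Matrix.sq_eq_trace_smul_sub_det_smul {R : Type*} [CommRing R]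
    (M : Matrix (Fin 2) (Fin 2) R) : M ^ 2 = M.trace • M - M.det • 1 := by
  ext i j
  fin_cases i <;> fin_cases j <;> simp [sq, mul_apply, trace_fin_two, det_fin_two] <;> ring

theorem Matrix.isSolution_dotProduct_pow_mulVec {R : Type*} [CommRing R]
    (M : Matrix (Fin 2) (Fin 2) R) (w v : Fin 2 → R) :
    (⟨2, ![-M.det, M.trace]⟩ : LinearRecurrence R).IsSolution fun n => w ⬝ᵥ (M ^ n) *ᵥ v := by
  intro n
  simp only [Fin.sum_univ_two, cons_val_zero, cons_val_one, Fin.val_zero,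
    Fin.val_one, add_zero]
  rw [pow_add, M.sq_eq_trace_smul_sub_det_smul, pow_succ]
  simp only [mul_sub, mul_smul_comm, mul_one, sub_mulVec, smul_mulVec, dotProduct_sub,
    dotProduct_smul, smul_eq_mul]
  ring

namespace Complex

theorem sin_add_two_mul_eq (θ p : ℂ) : sin (θ + 2 * p) = 2 * cos p * sin (θ + p) - sin θ := by
  rw [sin_add, sin_add, cos_two_mul, sin_two_mul]
  ring

theorem cos_add_two_mul_eq (θ p : ℂ) : cos (θ + 2 * p) = 2 * cos p * cos (θ + p) - cos θ := by
  rw [cos_add, cos_add, cos_two_mul, sin_two_mul]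
  ring

theorem ofReal_sin_div_sub_I_mul_ofReal_cos_ne_zero (x s : ℝ) (hs : s ≠ 0) :
    ((Real.sin x / s : ℝ) : ℂ) - I * (Real.cos x : ℂ) ≠ 0 := by
  intro h
  obtain ⟨hsin, hcos⟩ : Real.sin x / s = 0 ∧ Real.cos x = 0 := by
    generalize Real.sin x / s = a at h
    generalize Real.cos x = b at h
    simpa [Complex.ext_iff] using h
  rw [div_eq_zero_iff, or_iff_left hs] at hsin
  simpa [hsin, hcos] using Real.sin_sq_add_cos_sq x

end Complex

section TransferMatrix

open Complex

noncomputable def transferClosedForm (p : ℂ) (n : ℕ) : ℂ :=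
  2 * I ^ n * (sin ((n + 1) * p) / sin p - I * cos ((n + 1) * p))

theorem transferClosedForm_isSolution (p : ℂ) :
    (⟨2, ![1, 2 * I * cos p]⟩ : LinearRecurrence ℂ).IsSolution (transferClosedForm p) := by
  intro n
  simp only [Fin.sum_univ_two, cons_val_zero, cons_val_one, Fin.val_zero, Fin.val_one, add_zero,
    transferClosedForm]
  rw [show ((n + 2 : ℕ) + 1 : ℂ) * p = ((n : ℂ) + 1) * p + 2 * p by push_cast; ring,
    show ((n + 1 : ℕ) + 1 : ℂ) * p = ((n : ℂ) + 1) * p + p by push_cast; ring,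
    sin_add_two_mul_eq, cos_add_two_mul_eq]
  linear_combination (-2 * I ^ n * (sin ((n + 1) * p) / sin p - I * cos ((n + 1) * p))) * I_sq

theorem transferPairing_eq_transferClosedForm (p : ℂ) (hp : sin p ≠ 0) :
    (fun n : ℕ => ![(1 : ℂ), -1] ⬝ᵥ (!![0, 1; 1, 2 * I * cos p] ^ n) *ᵥ ![1, 2 * I * cos p - 1])
      = transferClosedForm p := by
  have hsol := (!![0, 1; 1, 2 * I * cos p]).isSolution_dotProduct_pow_mulVec
    ![(1 : ℂ), -1] ![1, 2 * I * cos p - 1]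
  have hdet : (!![0, 1; 1, 2 * I * cos p]).det = -1 := by simp [det_fin_two_of]
  have htr : (!![0, 1; 1, 2 * I * cos p]).trace = 2 * I * cos p := by simp [trace_fin_two_of]
  rw [hdet, htr, neg_neg] at hsol
  rw [LinearRecurrence.eq_iff_eqOn_range_order _ _ _ hsol (transferClosedForm_isSolution p)]
  intro n hn
  obtain rfl | rfl : n = 0 ∨ n = 1 := by simp only [Finset.coe_range, Set.mem_Iio] at hn; omega
  · simp only [pow_zero, one_mulVec, dotProduct_cons, head_cons, tail_cons, dotProduct_of_isEmpty,
      transferClosedForm, Nat.cast_zero, zero_add, one_mul, mul_one, div_self hp]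
    ring
  · simp only [dotProduct, mulVec, pow_one, of_apply, cons_val', cons_val_fin_one, Fin.sum_univ_two,
      cons_val_zero, cons_val_one, transferClosedForm, Nat.cast_one, one_add_one_eq_two,
      Complex.sin_two_mul, Complex.cos_two_mul]
    field_simp
    linear_combination -2 * I_sq

end TransferMatrix

/-- The kernel condition for the tridiagonal matrix `U`, expressed via the transfer matrix
`T = [[0,1],[1,2ic]]` with `c = cos p`: for every `m ≥ 0`,
`(1,−1)·T^m·(1, 2ic−1)ᵗ = 2·i^m·(sin((m+1)p)/sin p − i·cos((m+1)p))`, which is nonzero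
for `p ∈ (0, π/2)`. -/
theorem transfer_matrix_pairing (p : ℝ) (hp : Real.sin p ≠ 0) (c : ℝ) (hc : c = Real.cos p)
    (T : Matrix (Fin 2) (Fin 2) ℂ)
    (hT : T = !![0, 1; 1, 2 * Complex.I * (c : ℂ)]) :
    ∀ m : ℕ,
      (![(1 : ℂ), -1] ⬝ᵥ (T ^ m).mulVec ![1, 2 * Complex.I * (c : ℂ) - 1]) =
        2 * Complex.I ^ m *
          (((Real.sin ((m + 1) * p) / Real.sin p : ℝ) : ℂ) -
            Complex.I * ((Real.cos ((m + 1) * p) : ℝ) : ℂ)) ∧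
      (0 < p → p < π / 2 →
        (![(1 : ℂ), -1] ⬝ᵥ (T ^ m).mulVec ![1, 2 * Complex.I * (c : ℂ) - 1]) ≠ 0) := by
  intro m
  have hsin : Complex.sin p ≠ 0 := by exact_mod_cast hp
  have hformula : ![(1 : ℂ), -1] ⬝ᵥ (T ^ m).mulVec ![1, 2 * Complex.I * (c : ℂ) - 1] =
      2 * Complex.I ^ m * (((Real.sin ((m + 1) * p) / Real.sin p : ℝ) : ℂ) -
        Complex.I * ((Real.cos ((m + 1) * p) : ℝ) : ℂ)) := by
    rw [hT, hc, Complex.ofReal_cos, congrFun (transferPairing_eq_transferClosedForm p hsin) m,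
      transferClosedForm]
    push_cast
    rfl
  refine ⟨hformula, fun _ _ => hformula ▸ mul_ne_zero (by simp) ?_⟩
  exact Complex.ofReal_sin_div_sub_I_mul_ofReal_cos_ne_zero _ _ hp
end

section
/- Let m ≥ 0 be an integer, let p_F ∈ (0, π/2) and c = cos p_F (equivalently, let c be any real number with 0 < c < 1). Let U be the (m+1)×(m+1) tridiagonal matrix with diagonal entries U(j,j) = −2ic + [j = 0] + [j = m] (so 1 is added at both corner diagonal entries; for m = 0 the single entry is 2 − 2ic), superdiagonal entries U(j,j+1) = 1, subdiagonal entries U(j+1,j) = −1, and all other entries 0. Then det U ≠ 0, i.e. U is invertible. Consequently the (m+1)×(m+1) moment determinant det(A^l_k(m))|_{τ=0} is nonzero for 0 < h < 4J, so the monic polynomials P_m and Q_{m+1} of the high-temperature analysis are well defined at τ = 0. -/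
/-!
`U + Uᴴ` is diagonal, with entries `2·[j = 0] + 2·[j = m] ≥ 0`, since `-2ic` and the
off-diagonal part of `U` are skew-Hermitian. Hence a kernel vector `v` of `U` has `v 0 = 0`, and
the nonzero superdiagonal propagates this to `v = 0`.

`B` is the Hankel matrix `(e (k + l))` scaled by invertible diagonal matrices. For `m = n + 1`,
second differences of its rows have the three nonzero entries `1, a, -1` (`a = -2ic`), so a kernel
vector follows the continuant recurrence `w (j + 2) = a w (j + 1) + w j`. With `D = continuant a`,
the last two rows then force `w 0 · (D (n+2) + 2 D (n+1) + D n) = 0`. Since `D k = (-i)^k S_k(2c)`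
with `S_k` real, this combination can only vanish if `S_n(2c) = S_{n+1}(2c) = 0`, which the
Cassini-type identity `S_n² + S_{n+1}² - X S_n S_{n+1} = 1` excludes.
-/

open Finset Matrix Complex Polynomial

namespace Matrix

lemma star_dotProduct_add_conjTranspose_mulVec_eq_zero {ι α : Type*} [Fintype ι]
    [CommSemiring α] [StarRing α] {A : Matrix ι ι α} {v : ι → α} (hv : A *ᵥ v = 0) :
    star v ⬝ᵥ ((A + Aᴴ) *ᵥ v) = 0 := by
  rw [add_mulVec, dotProduct_add, hv, dotProduct_zero, zero_add, dotProduct_mulVec,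
    ← star_mulVec, hv, star_zero, zero_dotProduct]

lemma eq_zero_of_star_dotProduct_diagonal_mulVec_eq_zero {ι 𝕜 : Type*} [Fintype ι]
    [DecidableEq ι] [RCLike 𝕜] {d : ι → ℝ} (hd : ∀ i, 0 ≤ d i) {v : ι → 𝕜}
    (hv : star v ⬝ᵥ (diagonal (fun i => (d i : 𝕜)) *ᵥ v) = 0) {i : ι} (hi : 0 < d i) :
    v i = 0 := by
  have hsum : ∑ j, d j * ‖v j‖ ^ 2 = 0 := by
    apply RCLike.ofReal_injective (K := 𝕜)
    rw [RCLike.ofReal_zero, ← hv]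
    simp only [dotProduct, mulVec_diagonal, Pi.star_apply, RCLike.star_def, RCLike.ofReal_sum,
      RCLike.ofReal_mul, RCLike.ofReal_pow]
    refine sum_congr rfl fun j _ => ?_
    rw [← RCLike.conj_mul]
    ring
  have := (sum_eq_zero_iff_of_nonneg fun j _ => mul_nonneg (hd j) (sq_nonneg ‖v j‖)).1 hsum i
    (mem_univ i)
  simpa [hi.ne'] using this

lemma eq_zero_of_mulVec_eq_zero_of_superdiag {R : Type*} [Ring R] [NoZeroDivisors R] {m : ℕ}
    {A : Matrix (Fin (m + 1)) (Fin (m + 1)) R}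
    (hsuper : ∀ i : Fin m, A i.castSucc i.succ ≠ 0)
    (hzero : ∀ (i : Fin m) (k : Fin (m + 1)), i.succ < k → A i.castSucc k = 0)
    {v : Fin (m + 1) → R} (hv : A *ᵥ v = 0) (hv0 : v 0 = 0) : v = 0 := by
  suffices h : ∀ i : Fin (m + 1), ∀ k ≤ i, v k = 0 from funext fun k => h k k le_rfl
  intro i
  induction i using Fin.induction with
  | zero => intro k hk; rwa [Fin.le_zero_iff.1 hk]
  | succ i ih =>
    have hrow : A i.castSucc i.succ * v i.succ = 0 := by
      have hrow := congrFun hv i.castSucc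
      rwa [mulVec, dotProduct, sum_eq_single i.succ] at hrow
      · intro k _ hk
        rcases lt_or_gt_of_ne hk with hk | hk
        · rw [ih k (Fin.le_castSucc_iff.2 hk), mul_zero]
        · rw [hzero i k hk, zero_mul]
      · simp
    intro k hk
    rcases hk.lt_or_eq with hk | rfl
    · exact ih k (Fin.le_castSucc_iff.2 hk)
    · exact (mul_eq_zero.1 hrow).resolve_left (hsuper i)

lemma det_of_mul_mul {n R : Type*} [Fintype n] [DecidableEq n] [CommRing R] (r s : n → R)
    (A : n → n → R) :
    (of fun i j => r i * (s j * A i j)).det = (∏ i, r i) * ((∏ j, s j) * (of A).det) := by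
  rw [← det_mul_row, ← det_mul_column]
  rfl

end Matrix

noncomputable def continuant {R : Type*} [Semiring R] (a : R) : ℕ → R
  | 0 => 1
  | 1 => a
  | n + 2 => a * continuant a (n + 1) + continuant a n

section Continuant

variable {R : Type*}

section Semiring

variable [Semiring R] (a : R)

@[simp] lemma continuant_zero : continuant a 0 = 1 := rfl

@[simp] lemma continuant_one : continuant a 1 = a := rfl

lemma continuant_add_two (n : ℕ) :
    continuant a (n + 2) = a * continuant a (n + 1) + continuant a n := rfl

end Semiring

variable [CommRing R] (a : R)

lemma mul_sum_range_continuant (n : ℕ) :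
    a * ∑ k ∈ range (n + 1), continuant a k = continuant a (n + 1) + continuant a n - 1 := by
  induction n with
  | zero => simp
  | succ n ih =>
    rw [sum_range_succ, mul_add, ih, continuant_add_two]
    ring

lemma sum_range_mul_continuant (n : ℕ) :
    ∑ k ∈ range (n + 1), (2 + a * k) * continuant a k
      = (n + 1) * continuant a n + n * continuant a (n + 1) + 1 := by
  induction n with
  | zero => simp; ring
  | succ n ih =>
    rw [sum_range_succ, ih, continuant_add_two]
    push_cast
    ring

variable {a} in
lemma eq_mul_continuant_of_recurrence {w : ℕ → R} {N : ℕ} (h₁ : 1 ≤ N → w 1 = a * w 0)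
    (h : ∀ t, t + 2 ≤ N → w (t + 2) = a * w (t + 1) + w t) :
    ∀ j ≤ N, w j = w 0 * continuant a j := by
  intro j
  induction j using Nat.twoStepInduction with
  | zero => simp
  | one => intro hN; rw [h₁ hN, continuant_one, mul_comm]
  | more t ih₀ ih₁ =>
    intro hN
    rw [h t hN, ih₀ (by omega), ih₁ (by omega), continuant_add_two]
    ring

end Continuant

lemma Polynomial.Chebyshev.S_eval_natCast_add_two {R : Type*} [CommRing R] (x : R) (n : ℕ) :
    (S R (n + 2 : ℕ)).eval x = x * (S R (n + 1 : ℕ)).eval x - (S R n).eval x := by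
  simp [show ((n + 2 : ℕ) : ℤ) = (n : ℤ) + 2 by push_cast; ring]

lemma continuant_neg_two_mul_I (c : ℝ) (k : ℕ) :
    continuant (-2 * I * c) k = (-I) ^ k * ((Chebyshev.S ℝ k).eval (2 * c) : ℝ) := by
  induction k using Nat.twoStepInduction with
  | zero => simp
  | one => simp; ring
  | more k ih₀ ih₁ =>
    rw [continuant_add_two, ih₀, ih₁, Chebyshev.S_eval_natCast_add_two, ofReal_sub, ofReal_mul,
      ofReal_mul, ofReal_ofNat]
    linear_combination (-I) ^ k * (((Chebyshev.S ℝ k).eval (2 * c) : ℝ) : ℂ) * I_sq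

lemma continuant_neg_two_mul_I_ne_zero (c : ℝ) (n : ℕ) :
    continuant (-2 * I * c) (n + 2) + 2 * continuant (-2 * I * c) (n + 1)
      + continuant (-2 * I * c) n ≠ 0 := by
  simp only [continuant_neg_two_mul_I, Chebyshev.S_eval_natCast_add_two]
  have hcassini := congrArg (eval (2 * c)) (Chebyshev.S_sq_add_S_sq ℝ n)
  simp only [eval_sub, eval_add, eval_mul, eval_pow, eval_X, eval_one, ← Nat.cast_one (R := ℤ),
    ← Nat.cast_add] at hcassini
  generalize (Chebyshev.S ℝ n).eval (2 * c) = x at *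
  generalize (Chebyshev.S ℝ (n + 1 : ℕ)).eval (2 * c) = y at *
  intro h
  have h' : ((2 * x - 2 * c * y : ℝ) : ℂ) + ((-2 * y : ℝ) : ℂ) * I = 0 := by
    refine (mul_eq_zero.1 ?_).resolve_left (pow_ne_zero n (neg_ne_zero.2 I_ne_zero))
    push_cast at h ⊢
    linear_combination h + (-I) ^ n * (x - 2 * c * y) * I_sq
  have hy : y = 0 := by simpa using congrArg im h'
  have hx : x = 0 := by simpa [hy] using congrArg re h'
  simp [hx, hy] at hcassini

section Hankel

variable {K : Type*} [Field K] (a : K) (n : ℕ)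

def hankelSeq (s : ℕ) : K := if s < n then 0 else if s = n then 1 else 2 + a * ((s : K) - n)

lemma hankelSeq_add_self (k : ℕ) : hankelSeq a n (k + n) = if k = 0 then 1 else 2 + a * k := by
  rcases Nat.eq_zero_or_pos k with rfl | hk
  · simp [hankelSeq]
  · simp [hankelSeq, hk.ne', show ¬ k + n < n by omega]

variable {a n}

lemma hankelSeq_secondDiff {l t : ℕ} (h : l + t + 1 = n) (k : ℕ) :
    hankelSeq a n (k + l) - 2 * hankelSeq a n (k + l + 1) + hankelSeq a n (k + l + 2)
      = if k + 1 = t then 1 else if k = t then a else if k = t + 1 then -1 else 0 := by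
  subst h
  obtain hk | rfl | rfl | rfl | hk :
      k + 1 < t ∨ k + 1 = t ∨ k = t ∨ k = t + 1 ∨ t + 1 < k := by omega
  all_goals
    simp only [hankelSeq]
    split_ifs <;> first | omega | (push_cast; ring)

variable {w : ℕ → K}

lemma hankel_recurrence
    (hw : ∀ l ≤ n + 1, ∑ k ∈ range (n + 2), hankelSeq a n (k + l) * w k = 0)
    {l t : ℕ} (h : l + t + 1 = n) :
    (∑ k ∈ range (n + 2), if k + 1 = t then w k else 0) + a * w t - w (t + 1) = 0 := by
  have hrows : ∑ k ∈ range (n + 2), (hankelSeq a n (k + l) - 2 * hankelSeq a n (k + l + 1)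
      + hankelSeq a n (k + l + 2)) * w k = 0 := by
    simp only [add_mul, sub_mul, sum_add_distrib, sum_sub_distrib, mul_assoc, ← mul_sum,
      add_assoc, hw l (by omega), hw (l + 1) (by omega), hw (l + 2) (by omega)]
    ring
  have hpt : ∀ k,
      (if k + 1 = t then 1 else if k = t then a else if k = t + 1 then -1 else 0) * w k
      = (if k + 1 = t then w k else 0) + a * (if k = t then w k else 0)
        - (if k = t + 1 then w k else 0) := by
    intro k
    split_ifs <;> first | omega | ring
  refine Eq.trans ?_ hrows
  simp only [hankelSeq_secondDiff h, hpt, sum_add_distrib, sum_sub_distrib, ← mul_sum,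
    sum_ite_eq', mem_range, show t < n + 2 by omega, show t + 1 < n + 2 by omega, if_true]

lemma hankel_kernel_eq_mul_continuant
    (hw : ∀ l ≤ n + 1, ∑ k ∈ range (n + 2), hankelSeq a n (k + l) * w k = 0) :
    ∀ j ≤ n, w j = w 0 * continuant a j := by
  refine eq_mul_continuant_of_recurrence (fun hn => ?_) (fun t ht => ?_)
  · have := hankel_recurrence hw (l := n - 1) (t := 0) (by omega)
    simp only [Nat.add_eq_zero_iff, one_ne_zero, and_false, if_false, sum_const_zero,
      zero_add] at this
    linear_combination -this
  · have := hankel_recurrence hw (l := n - (t + 2)) (t := t + 1) (by omega)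
    simp only [add_left_inj, sum_ite_eq', mem_range, show t < n + 2 by omega, if_true] at this
    linear_combination -this

section Rows

variable (hrec : ∀ j ≤ n, w j = w 0 * continuant a j)
include hrec

lemma sum_hankelSeq_add_self_mul :
    ∑ k ∈ range (n + 2), hankelSeq a n (k + n) * w k
      = w 0 * ((n + 1) * continuant a n + n * continuant a (n + 1))
        + (2 + a * (n + 1)) * w (n + 1) := by
  have hpt : ∀ k ∈ range (n + 1), hankelSeq a n (k + n) * w k
      = w 0 * ((2 + a * k) * continuant a k) - if k = 0 then w 0 else 0 := by
    intro k hk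
    rw [hankelSeq_add_self, hrec k (by simpa [Nat.lt_succ_iff] using hk)]
    split_ifs with h0 <;> simp [h0] <;> ring
  rw [sum_range_succ, sum_congr rfl hpt, sum_sub_distrib, ← mul_sum, sum_range_mul_continuant,
    sum_ite_eq', if_pos (by simp), hankelSeq_add_self, if_neg (by omega)]
  push_cast
  ring

lemma sum_hankelSeq_add_self_add_one_mul :
    ∑ k ∈ range (n + 2), hankelSeq a n (k + (n + 1)) * w k
      = w 0 * ((n + 2) * continuant a n + (n + 1) * continuant a (n + 1))
        + (2 + a * (n + 2)) * w (n + 1) := by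
  have hpt : ∀ k ∈ range (n + 1), hankelSeq a n (k + (n + 1)) * w k
      = w 0 * ((2 + a * k) * continuant a k) + a * (w 0 * continuant a k) := by
    intro k hk
    rw [← add_assoc, add_right_comm, hankelSeq_add_self, if_neg (by omega),
      hrec k (by simpa [Nat.lt_succ_iff] using hk)]
    push_cast
    ring
  rw [sum_range_succ, sum_congr rfl hpt, sum_add_distrib, ← mul_sum, ← mul_sum, ← mul_sum,
    ← mul_assoc, mul_comm a, mul_assoc, mul_sum_range_continuant, sum_range_mul_continuant,
    show n + 1 + (n + 1) = n + 2 + n by omega, hankelSeq_add_self, if_neg (by omega)]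
  push_cast
  ring

end Rows

lemma hankel_kernel_eq_zero (ha : a ≠ 0)
    (hΔ : continuant a (n + 2) + 2 * continuant a (n + 1) + continuant a n ≠ 0)
    (hw : ∀ l ≤ n + 1, ∑ k ∈ range (n + 2), hankelSeq a n (k + l) * w k = 0) :
    ∀ k < n + 2, w k = 0 := by
  have hrec := hankel_kernel_eq_mul_continuant hw
  have hrow₀ := (sum_hankelSeq_add_self_mul hrec).symm.trans (hw n (by omega))
  have hrow₁ := (sum_hankelSeq_add_self_add_one_mul hrec).symm.trans (hw (n + 1) le_rfl)
  have hw₀ : w 0 = 0 := by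
    refine (mul_eq_zero.1 (?_ : w 0 * _ = 0)).resolve_right hΔ
    linear_combination (2 + a * (n + 1)) * hrow₁ - (2 + a * (n + 2)) * hrow₀
      + w 0 * continuant_add_two a n
  have hw₁ : w (n + 1) = 0 := by
    refine (mul_eq_zero.1 (?_ : a * _ = 0)).resolve_left ha
    linear_combination hrow₁ - hrow₀ - (continuant a n + continuant a (n + 1)) * hw₀
  intro k hk
  obtain hk | rfl : k ≤ n ∨ k = n + 1 := by omega
  · rw [hrec k hk, hw₀, zero_mul]
  · exact hw₁

lemma det_hankelSeq_ne_zero (ha : a ≠ 0)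
    (hΔ : continuant a (n + 2) + 2 * continuant a (n + 1) + continuant a n ≠ 0) :
    (of fun l k : Fin (n + 2) => hankelSeq a n (k + l)).det ≠ 0 := by
  intro hdet
  obtain ⟨v, hv0, hv⟩ := exists_mulVec_eq_zero_iff.2 hdet
  let w : ℕ → K := fun k => if h : k < n + 2 then v ⟨k, h⟩ else 0
  have hw : ∀ l ≤ n + 1, ∑ k ∈ range (n + 2), hankelSeq a n (k + l) * w k = 0 := by
    intro l hl
    rw [← Fin.sum_univ_eq_sum_range (fun k => hankelSeq a n (k + l) * w k)]
    simpa [w, mulVec, dotProduct] using congrFun hv ⟨l, by omega⟩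
  refine hv0 (funext fun k => ?_)
  simpa [w] using hankel_kernel_eq_zero ha hΔ hw k k.isLt

end Hankel

def tridiagU (m : ℕ) (c : ℝ) : Matrix (Fin (m + 1)) (Fin (m + 1)) ℂ := of fun j k =>
  if j = k then -2 * I * (c : ℂ) + (if j.val = 0 then 1 else 0) + (if j.val = m then 1 else 0)
  else if k.val = j.val + 1 then 1
  else if j.val = k.val + 1 then -1
  else 0

def cornerWeight (m : ℕ) (j : Fin (m + 1)) : ℝ :=
  (if j.val = 0 then 2 else 0) + (if j.val = m then 2 else 0)

lemma tridiagU_add_conjTranspose (m : ℕ) (c : ℝ) :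
    tridiagU m c + (tridiagU m c)ᴴ = diagonal fun j => (cornerWeight m j : ℂ) := by
  ext j k
  rw [Matrix.add_apply, conjTranspose_apply, diagonal_apply]
  simp only [tridiagU, of_apply, cornerWeight]
  rcases eq_or_ne j k with rfl | hjk
  · simp only [if_true]
    split_ifs <;> simp [Complex.ext_iff] <;> norm_num
  · have hjk' : (j : ℕ) ≠ k := Fin.val_ne_of_ne hjk
    simp only [hjk, hjk.symm, if_false]
    split_ifs <;> first | omega | simp

lemma det_tridiagU_ne_zero (m : ℕ) (c : ℝ) : (tridiagU m c).det ≠ 0 := by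
  intro hdet
  obtain ⟨v, hv0, hv⟩ := exists_mulVec_eq_zero_iff.2 hdet
  have hcorner : v 0 = 0 := by
    refine eq_zero_of_star_dotProduct_diagonal_mulVec_eq_zero (d := cornerWeight m)
      (fun j => by unfold cornerWeight; positivity) ?_ (by simp [cornerWeight]; positivity)
    have := star_dotProduct_add_conjTranspose_mulVec_eq_zero hv
    rwa [tridiagU_add_conjTranspose] at this
  refine hv0 (eq_zero_of_mulVec_eq_zero_of_superdiag (fun i => ?_) (fun i k hk => ?_) hv hcorner)
  · rw [tridiagU, of_apply, if_neg Fin.castSucc_lt_succ.ne, if_pos (by simp)]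
    exact one_ne_zero
  · rw [Fin.lt_def, Fin.val_succ] at hk
    rw [tridiagU, of_apply, if_neg (by rw [Fin.ext_iff]; simp; omega), if_neg (by simp; omega),
      if_neg (by simp; omega)]

theorem tridiagonal_det_ne_zero_general (m : ℕ) (c : ℝ) (hc0 : 0 < c)
    (U : Matrix (Fin (m + 1)) (Fin (m + 1)) ℂ)
    (hU : ∀ j k : Fin (m + 1), U j k =
      if j = k then
        -2 * Complex.I * (c : ℂ) + (if j.val = 0 then 1 else 0) +
          (if j.val = m then 1 else 0)
      else if k.val = j.val + 1 then 1
      else if j.val = k.val + 1 then -1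
      else 0)
    (e : ℕ → ℂ)
    (he : ∀ s : ℕ, e s =
      if s < m - 1 then 0
      else if s = m - 1 then 1
      else 2 - 2 * Complex.I * (c : ℂ) * ((s : ℂ) - (m : ℂ) + 1))
    (B : Matrix (Fin (m + 1)) (Fin (m + 1)) ℂ)
    (hB : ∀ l k : Fin (m + 1), B l k =
      -(Complex.I ^ ((m : ℤ) - (k.val : ℤ) - (l.val : ℤ)) / (c : ℂ)) * e (k.val + l.val)) :
    U.det ≠ 0 ∧ B.det ≠ 0 := by
  have hUeq : U = tridiagU m c := by ext j k; exact hU j k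
  refine ⟨hUeq ▸ det_tridiagU_ne_zero m c, ?_⟩
  have hc : (c : ℂ) ≠ 0 := ofReal_ne_zero.2 hc0.ne'
  have hBeq : B = of fun l k : Fin (m + 1) =>
      -(I ^ ((m : ℤ) - l.val) / c) * (I ^ (-(k.val : ℤ)) * e (k.val + l.val)) := by
    ext l k
    rw [hB, of_apply, show (m : ℤ) - k.val - l.val = ((m : ℤ) - l.val) + -(k.val : ℤ) by ring,
      zpow_add₀ I_ne_zero]
    ring
  have hH : (of fun l k : Fin (m + 1) => e (k + l)).det ≠ 0 := by
    cases m with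
    | zero => simp [he]
    | succ n =>
      have he' : e = hankelSeq (-2 * I * c) n := funext fun s => by
        rw [he, hankelSeq, Nat.add_sub_cancel]
        split_ifs <;> first | rfl | (push_cast; ring)
      rw [he']
      exact det_hankelSeq_ne_zero (by simp [hc]) (continuant_neg_two_mul_I_ne_zero c n)
  rw [hBeq, det_of_mul_mul]
  refine mul_ne_zero (prod_ne_zero_iff.2 fun l _ => ?_) (mul_ne_zero ?_ hH)
  · exact neg_ne_zero.2 (div_ne_zero (zpow_ne_zero _ I_ne_zero) hc)
  · exact prod_ne_zero_iff.2 fun k _ => zpow_ne_zero _ I_ne_zero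

/-- For `0 < c < 1` (e.g. `c = cos p_F` with `p_F ∈ (0, π/2)`) the tridiagonal matrix `U`
of the high-temperature analysis is invertible; consequently the `(m+1)×(m+1)` moment
determinant at `τ = 0` is nonzero, so the monic polynomials `P_m` and `Q_{m+1}` are
well defined at `τ = 0`. -/
theorem tridiagonal_det_ne_zero (m : ℕ) (c : ℝ) (hc0 : 0 < c) (hc1 : c < 1)
    (U : Matrix (Fin (m + 1)) (Fin (m + 1)) ℂ)
    (hU : ∀ j k : Fin (m + 1), U j k =
      if j = k then
        -2 * Complex.I * (c : ℂ) + (if j.val = 0 then 1 else 0) +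
          (if j.val = m then 1 else 0)
      else if k.val = j.val + 1 then 1
      else if j.val = k.val + 1 then -1
      else 0)
    (e : ℕ → ℂ)
    (he : ∀ s : ℕ, e s =
      if s < m - 1 then 0
      else if s = m - 1 then 1
      else 2 - 2 * Complex.I * (c : ℂ) * ((s : ℂ) - (m : ℂ) + 1))
    (B : Matrix (Fin (m + 1)) (Fin (m + 1)) ℂ)
    (hB : ∀ l k : Fin (m + 1), B l k =
      -(Complex.I ^ ((m : ℤ) - (k.val : ℤ) - (l.val : ℤ)) / (c : ℂ)) * e (k.val + l.val)) :
    U.det ≠ 0 ∧ B.det ≠ 0 :=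
  tridiagonal_det_ne_zero_general m c hc0 U hU e he B hB
end

section
/- Let n ≥ 1 be an integer, x : {1,…,n} → ℂ and y : {1,…,n−1} → ℂ with sinh(x_j − y_k) ≠ 0 for all j, k. Let A be the n×n matrix whose entries are A(j,k) = φ(x_j, y_k) = e^{y_k − x_j}/sinh(y_k − x_j) for 1 ≤ k ≤ n−1, and whose last column is A(j,n) = 1 for all j. Then (det A)² = D({x_j}_{j=1}^n, {y_k}_{k=1}^{n−1}), i.e. the square of this Cauchy-type determinant equals the squared generalized Cauchy determinant. -/
/-- `φ(a,b) = e^{b−a}/sinh(b−a)`. -/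
noncomputable def phiK (a b : ℂ) : ℂ := Complex.exp (b - a) / Complex.sinh (b - a)

/-- The squared generalized Cauchy determinant
`D({x_j},{y_k}) = [∏_{j<k} sinh²(x_j−x_k)]·[∏_{j<k} sinh²(y_j−y_k)] / ∏_{j,k} sinh²(x_j−y_k)`. -/
noncomputable def cauchySq {a b : ℕ} (x : Fin a → ℂ) (y : Fin b → ℂ) : ℂ :=
  ((∏ j : Fin a, ∏ k : Fin a, if j < k then Complex.sinh (x j - x k) ^ 2 else 1) *
      (∏ j : Fin b, ∏ k : Fin b, if j < k then Complex.sinh (y j - y k) ^ 2 else 1)) /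
    ∏ j : Fin a, ∏ k : Fin b, Complex.sinh (x j - y k) ^ 2

/-!
In the coordinates `u = e^{2x}`, `v = e^{2y}` one has `φ(x, y) = -2v / (u - v)` and
`sinh²(a - b) = (e^{2a} - e^{2b})² / (2e^{2a} · 2e^{2b})`. Scaling the columns of `A` by
`-2v_k` therefore leaves the bordered Cauchy matrix `[1/(u_j - v_k) | 1]`, and the factors
`2e^{2a}` cancel from `D` up to `∏ (2v_k)²`. The bordered Cauchy determinant is computed by
induction: subtracting the last row from the others reduces it to an ordinary Cauchy matrix one
size smaller, and subtracting the last column of that from the others gives back a bordered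
Cauchy matrix.
-/

open Finset Matrix

section PairProducts

variable {M : Type*} [CommMonoid M] {n : ℕ}

def prodPairs (g : Fin n → Fin n → M) : M :=
  ∏ j, ∏ k, if j < k then g j k else 1

theorem prodPairs_succ (g : Fin (n + 1) → Fin (n + 1) → M) :
    prodPairs g = prodPairs (fun j k : Fin n => g j.castSucc k.castSucc) *
      ∏ j : Fin n, g j.castSucc (.last n) := by
  simp [prodPairs, Fin.prod_univ_castSucc, Fin.castSucc_lt_last, not_lt.2 (Fin.le_last _),
    prod_mul_distrib]

theorem prodPairs_mul (g g' : Fin n → Fin n → M) :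
    prodPairs (fun j k => g j k * g' j k) = prodPairs g * prodPairs g' := by
  simp only [prodPairs, ite_mul_one, prod_mul_distrib]

theorem prodPairs_mul_mul_prod (f : Fin n → M) :
    prodPairs (fun j k => f j * f k) * ∏ j, f j = (∏ j, f j) ^ n := by
  induction n with
  | zero => simp [prodPairs]
  | succ n ih =>
    rw [prodPairs_succ, prod_mul_distrib, prod_const, card_univ, Fintype.card_fin,
      Fin.prod_univ_castSucc]
    calc _ = (prodPairs (fun j k : Fin n => f j.castSucc * f k.castSucc) *
            ∏ j : Fin n, f j.castSucc) * (∏ j : Fin n, f j.castSucc) * f (.last n) ^ (n + 1) := by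
          rw [pow_succ]; ac_rfl
      _ = _ := by rw [ih, ← pow_succ, mul_pow]

theorem prodPairs_mul_apply_mul_prod (g : Fin n → Fin n → M) (f : Fin n → M) :
    prodPairs (fun j k => g j k * (f j * f k)) * ∏ j, f j = prodPairs g * (∏ j, f j) ^ n := by
  rw [prodPairs_mul, mul_assoc, prodPairs_mul_mul_prod]

end PairProducts

section CauchyMatrix

variable {R K : Type*} [CommRing R] [Field K] {n : ℕ}

theorem det_eq_mul_det_submatrix_castSucc (A : Matrix (Fin (n + 1)) (Fin (n + 1)) R)
    (hA : ∀ i : Fin n, A i.castSucc (.last n) = 0) :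
    A.det = A (.last n) (.last n) * (A.submatrix Fin.castSucc Fin.castSucc).det := by
  rw [det_succ_column A (.last n), Fin.sum_univ_castSucc, sum_eq_zero (by simp [hA]), zero_add,
    Fin.val_last, Even.neg_one_pow ⟨n, rfl⟩, one_mul, Fin.succAbove_last]

theorem prod_sub_sq_eq_sq_prod_sub {ι : Type*} [Fintype ι] (a : ι → R) (b : R) :
    ∏ j, (a j - b) ^ 2 = (∏ j, (b - a j)) ^ 2 := by
  rw [← prod_pow]
  exact prod_congr rfl fun _ _ => by ring

theorem prod_prod_sub_sq_succ (u : Fin (n + 2) → R) (v : Fin (n + 1) → R) :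
    ∏ j, ∏ k, (u j - v k) ^ 2 = (∏ j, ∏ k, (Fin.init u j - Fin.init v k) ^ 2) *
      (∏ j, (Fin.init u j - v (.last _)) ^ 2) * ∏ k, (u (.last _) - v k) ^ 2 := by
  simp only [Fin.prod_univ_castSucc, prod_mul_distrib, Fin.init]
  ring

def cauchyMatrix {ι κ : Type*} (u : ι → K) (v : κ → K) : Matrix ι κ K :=
  of fun j k => (u j - v k)⁻¹

def borderedCauchyMatrix (u : Fin (n + 1) → K) (v : Fin n → K) :
    Matrix (Fin (n + 1)) (Fin (n + 1)) K :=
  of fun j k => Fin.lastCases 1 (fun k' => (u j - v k')⁻¹) k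

theorem det_borderedCauchyMatrix_succ (u : Fin (n + 2) → K) (v : Fin (n + 1) → K)
    (huv : ∀ j k, u j ≠ v k) :
    (borderedCauchyMatrix u v).det = (∏ j, (u (.last _) - Fin.init u j)) *
      ((∏ k, (u (.last _) - v k)⁻¹) * (cauchyMatrix (Fin.init u) v).det) := by
  set B := borderedCauchyMatrix u v
  set M : Matrix (Fin (n + 2)) (Fin (n + 2)) K :=
    of fun j k => B j k + (if j = .last _ then 0 else -1) * B (.last _) k
  have hM : M.submatrix Fin.castSucc Fin.castSucc = of fun j k => (u (.last _) - Fin.init u j) *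
      (of fun j k => (u (.last _) - v k)⁻¹ * cauchyMatrix (Fin.init u) v j k) j k := by
    ext j k
    have := sub_ne_zero.2 (huv j.castSucc k)
    have := sub_ne_zero.2 (huv (.last _) k)
    simp [M, B, borderedCauchyMatrix, cauchyMatrix, Fin.init, (Fin.castSucc_lt_last j).ne]
    field_simp
    ring
  rw [← det_eq_of_forall_row_eq_smul_add_const (A := M) _ (.last _) (if_pos rfl) fun _ _ => rfl,
    det_eq_mul_det_submatrix_castSucc _ (by simp [M, B, borderedCauchyMatrix,
      (Fin.castSucc_lt_last _).ne]), hM, det_mul_column, det_mul_row]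
  simp [M, B, borderedCauchyMatrix]

theorem det_cauchyMatrix_succ (u v : Fin (n + 1) → K) (huv : ∀ j k, u j ≠ v k) :
    (cauchyMatrix u v).det = (∏ j, (u j - v (.last _))⁻¹) *
      ((∏ k, (Fin.init v k - v (.last _))) * (borderedCauchyMatrix u (Fin.init v)).det) := by
  set C := cauchyMatrix u v
  set M : Matrix (Fin (n + 1)) (Fin (n + 1)) K :=
    of fun j k => C j k + (if k = .last _ then 0 else -1) * C j (.last _)
  have hM : M = of fun j k => (u j - v (.last _))⁻¹ * (of fun j k =>
      Fin.lastCases (motive := fun _ => K) 1 (fun k' => Fin.init v k' - v (.last _)) k *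
        borderedCauchyMatrix u (Fin.init v) j k) j k := by
    ext j k
    induction k using Fin.lastCases with
    | last => simp [M, C, cauchyMatrix, borderedCauchyMatrix]
    | cast k =>
      have := sub_ne_zero.2 (huv j k.castSucc)
      have := sub_ne_zero.2 (huv j (.last _))
      simp [M, C, cauchyMatrix, borderedCauchyMatrix, Fin.init, (Fin.castSucc_lt_last k).ne]
      field_simp
      ring
  have hMC : M.det = C.det := by
    rw [← det_transpose, ← det_transpose C]
    exact det_eq_of_forall_row_eq_smul_add_const _ (.last _) (if_pos rfl) fun _ _ => rfl
  rw [← hMC, hM, det_mul_column, det_mul_row, Fin.prod_univ_castSucc (f := Fin.lastCases _ _)]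
  simp

theorem det_borderedCauchyMatrix_sq_mul (u : Fin (n + 1) → K) (v : Fin n → K)
    (huv : ∀ j k, u j ≠ v k) :
    (borderedCauchyMatrix u v).det ^ 2 * ∏ j, ∏ k, (u j - v k) ^ 2 =
      prodPairs (fun j k => (u j - u k) ^ 2) * prodPairs (fun j k => (v j - v k) ^ 2) := by
  induction n with
  | zero =>
    have : borderedCauchyMatrix u v 0 0 = 1 := rfl
    simp [this, prodPairs]
  | succ n ih =>
    have hG : ∏ k, (u (.last _) - v k) ≠ 0 :=
      prod_ne_zero_iff.2 fun k _ => sub_ne_zero.2 (huv _ k)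
    have hH : ∏ j, (Fin.init u j - v (.last _)) ≠ 0 :=
      prod_ne_zero_iff.2 fun j _ => sub_ne_zero.2 (huv _ _)
    calc _ = ((borderedCauchyMatrix (Fin.init u) (Fin.init v)).det ^ 2 *
            ∏ j, ∏ k, (Fin.init u j - Fin.init v k) ^ 2) *
          ((∏ j, (u (.last _) - Fin.init u j)) ^ 2 * (∏ k, (Fin.init v k - v (.last _))) ^ 2) := by
          rw [det_borderedCauchyMatrix_succ u v huv,
            det_cauchyMatrix_succ (Fin.init u) v fun j k => huv _ _, prod_prod_sub_sq_succ,
            prod_inv_distrib, prod_inv_distrib]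
          simp only [prod_pow]
          field_simp
      _ = _ := by
          rw [ih (Fin.init u) (Fin.init v) fun j k => huv _ _,
            prodPairs_succ (fun j k => (u j - u k) ^ 2), prodPairs_succ (fun j k => (v j - v k) ^ 2),
            prod_sub_sq_eq_sq_prod_sub, prod_pow]
          simp only [Fin.init]
          ring

end CauchyMatrix

section Hyperbolic

open Complex

theorem sinh_sub_mul_two_exp_add (a b : ℂ) :
    sinh (a - b) * (2 * exp (a + b)) = exp (2 * a) - exp (2 * b) := by
  have ha : exp (a - b) * exp (a + b) = exp (2 * a) := by rw [← exp_add]; ring_nf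
  have hb : exp (-(a - b)) * exp (a + b) = exp (2 * b) := by rw [← exp_add]; ring_nf
  linear_combination exp (a + b) * two_sinh (a - b) + ha - hb

theorem sinh_sub_sq (a b : ℂ) : sinh (a - b) ^ 2 =
    (exp (2 * a) - exp (2 * b)) ^ 2 * ((2 * exp (2 * a))⁻¹ * (2 * exp (2 * b))⁻¹) := by
  have hab : (2 * exp (a + b)) ^ 2 = 2 * exp (2 * a) * (2 * exp (2 * b)) := by
    rw [mul_mul_mul_comm, ← exp_add, mul_pow, sq (exp _), ← exp_add]
    ring_nf
  rw [← sinh_sub_mul_two_exp_add, mul_pow, hab]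
  field_simp

theorem phiK_eq (a b : ℂ) : phiK a b = -(2 * exp (2 * b)) * (exp (2 * a) - exp (2 * b))⁻¹ := by
  have hnum : exp (b - a) * (2 * exp (b + a)) = 2 * exp (2 * b) := by
    rw [mul_left_comm, ← exp_add]; ring_nf
  rw [phiK, ← mul_div_mul_right _ _ (mul_ne_zero two_ne_zero (exp_ne_zero (b + a))),
    sinh_sub_mul_two_exp_add, hnum, div_eq_mul_inv, ← neg_sub (exp (2 * a)), inv_neg]
  ring

theorem cauchySq_eq_prodPairs {a b : ℕ} (x : Fin a → ℂ) (y : Fin b → ℂ) :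
    cauchySq x y = prodPairs (fun j k => sinh (x j - x k) ^ 2) *
      prodPairs (fun j k => sinh (y j - y k) ^ 2) / ∏ j, ∏ k, sinh (x j - y k) ^ 2 :=
  rfl

theorem cauchySq_eq_exp {m : ℕ} (x : Fin (m + 1) → ℂ) (y : Fin m → ℂ) :
    cauchySq x y = prodPairs (fun j k => (exp (2 * x j) - exp (2 * x k)) ^ 2) *
      prodPairs (fun j k => (exp (2 * y j) - exp (2 * y k)) ^ 2) /
      (∏ j, ∏ k, (exp (2 * x j) - exp (2 * y k)) ^ 2) * (∏ k, 2 * exp (2 * y k)) ^ 2 := by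
  set g : ℂ → ℂ := fun a => (2 * exp (2 * a))⁻¹
  have hX : ∏ j, g (x j) ≠ 0 := prod_ne_zero_iff.2 fun _ _ => by simp [g, exp_ne_zero]
  have hY : ∏ k, g (y k) ≠ 0 := prod_ne_zero_iff.2 fun _ _ => by simp [g, exp_ne_zero]
  have hx := prodPairs_mul_apply_mul_prod (fun j k => (exp (2 * x j) - exp (2 * x k)) ^ 2) (g ∘ x)
  have hy := prodPairs_mul_apply_mul_prod (fun j k => (exp (2 * y j) - exp (2 * y k)) ^ 2) (g ∘ y)
  have hxy : ∏ j, ∏ k, (exp (2 * x j) - exp (2 * y k)) ^ 2 * (g (x j) * g (y k)) =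
      (∏ j, ∏ k, (exp (2 * x j) - exp (2 * y k)) ^ 2) * (∏ j, g (x j)) ^ m *
        (∏ k, g (y k)) ^ (m + 1) := by
    simp [prod_mul_distrib, prod_pow, mul_assoc]
  have hW : ∏ k, 2 * exp (2 * y k) = (∏ k, g (y k))⁻¹ := by
    simp only [g, prod_inv_distrib, inv_inv]
  simp only [Function.comp] at hx hy
  rw [cauchySq_eq_prodPairs]
  simp only [sinh_sub_sq]
  rw [eq_div_of_mul_eq hX hx, eq_div_of_mul_eq hY hy, hxy, hW]
  field_simp
  ring

end Hyperbolic

/-- The square of the Cauchy-type determinant with entries `φ(x_j, y_k)` and last column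
of ones equals the squared generalized Cauchy determinant. -/
theorem cauchy_det_squared (m : ℕ) (x : Fin (m + 1) → ℂ) (y : Fin m → ℂ)
    (h : ∀ (j : Fin (m + 1)) (k : Fin m), Complex.sinh (x j - y k) ≠ 0)
    (A : Matrix (Fin (m + 1)) (Fin (m + 1)) ℂ)
    (hA : ∀ (j : Fin (m + 1)) (k : Fin (m + 1)),
      A j k = Fin.lastCases 1 (fun k' => phiK (x j) (y k')) k) :
    A.det ^ 2 = cauchySq x y := by
  set u : Fin (m + 1) → ℂ := fun j => Complex.exp (2 * x j)
  set v : Fin m → ℂ := fun k => Complex.exp (2 * y k)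
  have huv : ∀ j k, u j ≠ v k := fun j k huv => h j k <| by
    rw [← sq_eq_zero_iff, sinh_sub_sq, show Complex.exp (2 * x j) = Complex.exp (2 * y k) from huv]
    simp
  have hA' : A = of fun j k => Fin.lastCases (motive := fun _ => ℂ) 1 (fun k' => -(2 * v k')) k *
      borderedCauchyMatrix u v j k := by
    ext j k
    rw [hA]
    induction k using Fin.lastCases <;> simp [borderedCauchyMatrix, phiK_eq, u, v]
  have hQ : ∏ j, ∏ k, (u j - v k) ^ 2 ≠ 0 := by
    simp [prod_ne_zero_iff, sub_eq_zero, huv]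
  calc A.det ^ 2 = (∏ k, 2 * v k) ^ 2 * (borderedCauchyMatrix u v).det ^ 2 := by
        rw [hA', det_mul_row, Fin.prod_univ_castSucc]
        simp only [Fin.lastCases_last, Fin.lastCases_castSucc, mul_one, mul_pow, ← prod_pow,
          neg_sq]
    _ = prodPairs (fun j k => (u j - u k) ^ 2) * prodPairs (fun j k => (v j - v k) ^ 2) /
          (∏ j, ∏ k, (u j - v k) ^ 2) * (∏ k, 2 * v k) ^ 2 := by
        rw [← det_borderedCauchyMatrix_sq_mul u v huv]
        field_simp
    _ = cauchySq x y := (cauchySq_eq_exp x y).symm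
end
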